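/- arXiv:math/0611687 — 3 statements merged into one kernel-verified Lean document; each statement's English description precedes it below -/
import Mathlib

section
/- Let κ be a real number with 8/3 < κ < 8, let λ ∈ ℂ, let s ∈ ℂ satisfy s² = (1 − 4/κ)² + 8λ/κ, and define M^e_{κ,λ}(θ) = F(1 − 4/κ + s, 1 − 4/κ − s; 3/2 − 4/κ; sin²(θ/4)) for real θ. Then for every real θ with 0 < |θ| < 2π, the function M^e_{κ,λ} is twice differentiable at θ and satisfies λ·M^e_{κ,λ}(θ) + ((κ − 4)/2)·cot(θ/2)·(M^e_{κ,λ})′(θ) + (κ/2)·(M^e_{κ,λ})″(θ) = 0. -/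
set_option maxHeartbeats 1000000


open scoped Real

/-- The `n`-th coefficient of the Gauss hypergeometric series `F(a,b;c;·)`. -/
noncomputable def hypCoef (a b c : ℂ) (n : ℕ) : ℂ :=
  ((ascPochhammer ℂ n).eval a * (ascPochhammer ℂ n).eval b) /
    ((ascPochhammer ℂ n).eval c * (n.factorial : ℂ))

lemma MeAux.poch_ne_zero {c : ℂ} (hc : ∀ n : ℕ, c + n ≠ 0) (n : ℕ) :
    (ascPochhammer ℂ n).eval c ≠ 0 := by
  induction n with
  | zero => simp
  | succ n ih =>
    rw [ascPochhammer_succ_eval]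
    exact mul_ne_zero ih (hc n)

lemma MeAux.rec {a b c : ℂ} (hc : ∀ n : ℕ, c + n ≠ 0) (n : ℕ) :
    hypCoef a b c (n + 1) * ((c + n) * ((n : ℂ) + 1))
      = hypCoef a b c n * ((a + n) * (b + n)) := by
  have h1 := MeAux.poch_ne_zero hc n
  have h2 : ((n.factorial : ℂ)) ≠ 0 := Nat.cast_ne_zero.2 n.factorial_ne_zero
  have h3 : ((n : ℂ) + 1) ≠ 0 := Nat.cast_add_one_ne_zero n
  have h4 := hc n
  simp only [hypCoef, ascPochhammer_succ_eval, Nat.factorial_succ, Nat.cast_mul]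
  push_cast
  field_simp

lemma MeAux.tendsto_ratio (a b : ℂ) {r : ℝ} :
    Filter.Tendsto (fun n : ℕ => ((‖a‖ + n) * (‖b‖ + n) * r) / ((n : ℝ) * (n + 1)))
      Filter.atTop (nhds r) := by
  have h1 : Filter.Tendsto (fun n : ℕ => ‖a‖ / n + 1) Filter.atTop (nhds 1) := by
    simpa using (tendsto_const_div_atTop_nhds_zero_nat ‖a‖).add tendsto_const_nhds
  have h2 : Filter.Tendsto (fun n : ℕ => (‖b‖ - 1) * (1 / ((n : ℝ) + 1)) + 1)
      Filter.atTop (nhds 1) := by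
    simpa using ((tendsto_one_div_add_atTop_nhds_zero_nat).const_mul (‖b‖ - 1)).add
      (tendsto_const_nhds (x := (1:ℝ)))
  have := ((h1.mul h2).const_mul r)
  simp only [mul_one] at this
  apply this.congr'
  filter_upwards [Filter.eventually_gt_atTop 0] with n hn
  have hn0 : (n : ℝ) ≠ 0 := Nat.cast_ne_zero.2 hn.ne'
  have hn1 : (n : ℝ) + 1 ≠ 0 := by positivity
  field_simp
  ring

lemma MeAux.summable_norm {a b c : ℂ} (hc : ∀ n : ℕ, c + n ≠ 0)
    (hcn : ∀ n : ℕ, (n : ℝ) ≤ ‖c + n‖) {r : ℝ} (hr0 : 0 ≤ r) (hr : r < 1) :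
    Summable (fun n : ℕ => ‖hypCoef a b c n‖ * r ^ n) := by
  set r' : ℝ := (1 + r) / 2 with hr'def
  have hr'1 : r' < 1 := by rw [hr'def]; linarith
  have hrr' : r < r' := by rw [hr'def]; linarith
  apply summable_of_ratio_norm_eventually_le hr'1
  have hev : ∀ᶠ n : ℕ in Filter.atTop,
      ((‖a‖ + n) * (‖b‖ + n) * r) / ((n : ℝ) * (n + 1)) < r' :=
    (MeAux.tendsto_ratio a b).eventually_lt_const hrr'
  filter_upwards [hev, Filter.eventually_gt_atTop 0] with n hn hn0
  have hnpos : (0:ℝ) < (n : ℝ) * (n + 1) := by positivity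
  have hineq : (‖a‖ + n) * (‖b‖ + n) * r ≤ r' * ((n : ℝ) * (n + 1)) := by
    have := (div_lt_iff₀ hnpos).mp hn
    linarith
  -- master norm inequality from the recurrence
  have hrec := MeAux.rec (a := a) (b := b) hc n
  have hnorm : ‖hypCoef a b c (n+1)‖ * (‖c + n‖ * ‖(n : ℂ) + 1‖)
      = ‖hypCoef a b c n‖ * (‖a + n‖ * ‖b + n‖) := by
    rw [← norm_mul, ← norm_mul, ← norm_mul, ← norm_mul, hrec]
  have hub : ‖a + n‖ * ‖b + n‖ ≤ (‖a‖ + n) * (‖b‖ + n) := by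
    have h1 : ‖a + n‖ ≤ ‖a‖ + n := by
      simpa using norm_add_le a (n : ℂ)
    have h2 : ‖b + n‖ ≤ ‖b‖ + n := by
      simpa using norm_add_le b (n : ℂ)
    exact mul_le_mul h1 h2 (norm_nonneg _) (by positivity)
  have hlb : (n : ℝ) * (n + 1) ≤ ‖c + n‖ * ‖(n : ℂ) + 1‖ := by
    have h2 : ‖(n : ℂ) + 1‖ = (n : ℝ) + 1 := by
      rw [show ((n : ℂ) + 1) = ((n + 1 : ℕ) : ℂ) by push_cast; ring,
        Complex.norm_natCast]
      push_cast; ring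
    rw [h2]
    exact mul_le_mul_of_nonneg_right (hcn n) (by positivity)
  -- combine: n(n+1) ‖C(n+1)‖ ≤ (‖a‖+n)(‖b‖+n) ‖C n‖
  have key : ((n : ℝ) * (n + 1)) * ‖hypCoef a b c (n+1)‖
      ≤ (‖a‖ + n) * (‖b‖ + n) * ‖hypCoef a b c n‖ := by
    calc ((n : ℝ) * (n + 1)) * ‖hypCoef a b c (n+1)‖
        ≤ (‖c + n‖ * ‖(n : ℂ) + 1‖) * ‖hypCoef a b c (n+1)‖ :=
          mul_le_mul_of_nonneg_right hlb (norm_nonneg _)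
      _ = ‖hypCoef a b c n‖ * (‖a + n‖ * ‖b + n‖) := by rw [← hnorm]; ring
      _ ≤ (‖a‖ + n) * (‖b‖ + n) * ‖hypCoef a b c n‖ := by
          have := mul_le_mul_of_nonneg_left hub (norm_nonneg (hypCoef a b c n))
          linarith
  -- conclude
  have h3 : ‖hypCoef a b c (n+1)‖ * r ^ (n+1) ≤ r' * (‖hypCoef a b c n‖ * r ^ n) := by
    have hrn : (0:ℝ) ≤ r ^ n := by positivity
    have step1 : ((n : ℝ) * (n + 1)) * (‖hypCoef a b c (n+1)‖ * r)
        ≤ r' * ((n : ℝ) * (n + 1)) * ‖hypCoef a b c n‖ := by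
      have c1 : ((n : ℝ) * (n + 1)) * ‖hypCoef a b c (n+1)‖ * r
          ≤ (‖a‖ + n) * (‖b‖ + n) * ‖hypCoef a b c n‖ * r :=
        mul_le_mul_of_nonneg_right key hr0
      have c2 : (‖a‖ + n) * (‖b‖ + n) * r * ‖hypCoef a b c n‖
          ≤ r' * ((n : ℝ) * (n + 1)) * ‖hypCoef a b c n‖ :=
        mul_le_mul_of_nonneg_right hineq (norm_nonneg _)
      nlinarith [norm_nonneg (hypCoef a b c n)]
    have step2 : ‖hypCoef a b c (n+1)‖ * r ≤ r' * ‖hypCoef a b c n‖ :=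
      le_of_mul_le_mul_left (by linarith [step1]) hnpos
    calc ‖hypCoef a b c (n+1)‖ * r ^ (n+1)
        = (‖hypCoef a b c (n+1)‖ * r) * r ^ n := by ring
      _ ≤ (r' * ‖hypCoef a b c n‖) * r ^ n := mul_le_mul_of_nonneg_right step2 hrn
      _ = r' * (‖hypCoef a b c n‖ * r ^ n) := by ring
  calc ‖‖hypCoef a b c (n+1)‖ * r ^ (n+1)‖ = ‖hypCoef a b c (n+1)‖ * r ^ (n+1) := by
        rw [Real.norm_of_nonneg (by positivity)]
    _ ≤ r' * (‖hypCoef a b c n‖ * r ^ n) := h3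
    _ = r' * ‖‖hypCoef a b c n‖ * r ^ n‖ := by rw [Real.norm_of_nonneg (by positivity)]

lemma MeAux.one_le_radius {a b c : ℂ} (hc : ∀ n : ℕ, c + n ≠ 0)
    (hcn : ∀ n : ℕ, (n : ℝ) ≤ ‖c + n‖) :
    1 ≤ (FormalMultilinearSeries.ofScalars ℂ (hypCoef a b c)).radius := by
  refine ENNReal.le_of_forall_nnreal_lt fun r hr => ?_
  apply FormalMultilinearSeries.le_radius_of_summable_norm
  have hr1 : (r : ℝ) < 1 := by exact_mod_cast hr
  have := MeAux.summable_norm (a := a) (b := b) hc hcn r.coe_nonneg hr1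
  exact this.congr fun n => by rw [FormalMultilinearSeries.ofScalars_norm]

lemma MeAux.key {a b c : ℂ} (hc : ∀ n : ℕ, c + n ≠ 0)
    (hcn : ∀ n : ℕ, (n : ℝ) ≤ ‖c + n‖) {y : ℂ} (hy : ‖y‖ < 1) (hy0 : y ≠ 0) :
    DifferentiableAt ℂ (FormalMultilinearSeries.ofScalars ℂ (hypCoef a b c)).sum y ∧
    DifferentiableAt ℂ (deriv (FormalMultilinearSeries.ofScalars ℂ (hypCoef a b c)).sum) y ∧
    y * (1 - y) * deriv (deriv (FormalMultilinearSeries.ofScalars ℂ (hypCoef a b c)).sum) y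
      + (c - (1 + a + b) * y) * deriv (FormalMultilinearSeries.ofScalars ℂ (hypCoef a b c)).sum y
      - a * b * (FormalMultilinearSeries.ofScalars ℂ (hypCoef a b c)).sum y = 0 := by
  set C := hypCoef a b c with hCdef
  set p := FormalMultilinearSeries.ofScalars ℂ C with hpdef
  set g := p.sum with hgdef
  have hrad : 1 ≤ p.radius := MeAux.one_le_radius hc hcn
  have hp : HasFPowerSeriesOnBall g p 0 1 :=
    (p.hasFPowerSeriesOnBall (lt_of_lt_of_le one_pos hrad)).mono one_pos hrad
  have hmem : y ∈ Metric.eball (0 : ℂ) 1 := by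
    rw [mem_emetric_ball_zero_iff, ← ofReal_norm, ENNReal.ofReal_lt_one]
    exact hy
  have hd : HasFPowerSeriesOnBall (fderiv ℂ g) p.derivSeries 0 1 := hp.fderiv
  set L1 : (ℂ →L[ℂ] ℂ) →L[ℂ] ℂ := ContinuousLinearMap.apply ℂ ℂ (1 : ℂ) with hL1
  have hderiv_eq : deriv g = fun z => L1 (fderiv ℂ g z) := rfl
  set q := L1.compFormalMultilinearSeries p.derivSeries with hqdef
  have hq1 : HasFPowerSeriesOnBall (deriv g) q 0 1 := by
    rw [hderiv_eq]
    exact L1.comp_hasFPowerSeriesOnBall hd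
  have hq2 : HasFPowerSeriesOnBall (fderiv ℂ (deriv g)) q.derivSeries 0 1 := hq1.fderiv
  have hdg : DifferentiableAt ℂ g y := (hp.analyticAt_of_mem hmem).differentiableAt
  have hdg2 : DifferentiableAt ℂ (deriv g) y := (hq1.analyticAt_of_mem hmem).differentiableAt
  have heval : ∀ A : ℂ →L[ℂ] ℂ, A 1 = y⁻¹ * A y := by
    intro A
    have h1 : A y = y * A 1 := by
      conv_lhs => rw [show y = y • (1:ℂ) by simp]
      rw [map_smul, smul_eq_mul]
    rw [h1]
    field_simp
  have H0 : HasSum (fun n : ℕ => C n * y ^ n) (g y) := by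
    have h := hp.hasSum hmem
    rw [zero_add] at h
    have hfun : (fun n : ℕ => p n fun _ => y) = fun n : ℕ => C n * y ^ n := by
      funext n
      rw [hpdef, FormalMultilinearSeries.ofScalars_apply_eq, smul_eq_mul]
    rwa [hfun] at h
  have H1 : HasSum (fun n : ℕ => ((n : ℂ) + 1) * C (n + 1) * y ^ n) (deriv g y) := by
    have h := (hd.hasSum hmem).mapL L1
    rw [zero_add] at h
    have hfun : (fun n : ℕ => L1 (p.derivSeries n fun _ => y))
        = fun n : ℕ => ((n : ℂ) + 1) * C (n + 1) * y ^ n := by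
      funext n
      have e1 : L1 (p.derivSeries n fun _ => y) = (p.derivSeries n fun _ => y) 1 := rfl
      rw [e1, heval, p.derivSeries_apply_diag, hpdef,
        FormalMultilinearSeries.ofScalars_apply_eq]
      rw [nsmul_eq_mul, smul_eq_mul, pow_succ]
      push_cast
      field_simp
    rw [hfun] at h
    exact h
  have H2 : HasSum (fun n : ℕ => ((n : ℂ) + 2) * ((n : ℂ) + 1) * C (n + 2) * y ^ n)
      (deriv (deriv g) y) := by
    have h := (hq2.hasSum hmem).mapL L1
    rw [zero_add] at h
    have hfun : (fun n : ℕ => L1 (q.derivSeries n fun _ => y))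
        = fun n : ℕ => ((n : ℂ) + 2) * ((n : ℂ) + 1) * C (n + 2) * y ^ n := by
      funext n
      have e1 : L1 (q.derivSeries n fun _ => y) = (q.derivSeries n fun _ => y) 1 := rfl
      rw [e1, heval, q.derivSeries_apply_diag]
      have e2 : q (n + 1) (fun _ => y) = (p.derivSeries (n + 1) fun _ => y) 1 := rfl
      rw [e2, heval, p.derivSeries_apply_diag, hpdef,
        FormalMultilinearSeries.ofScalars_apply_eq]
      rw [nsmul_eq_mul, nsmul_eq_mul, smul_eq_mul, pow_succ, pow_succ]
      push_cast
      field_simp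
      ring
    rw [hfun] at h
    exact h
  set S0 := g y with hS0
  set S1 := deriv g y with hS1
  set S2 := deriv (deriv g) y with hS2
  have HzS2 : HasSum (fun n : ℕ => ((n : ℂ) + 1) * (n : ℂ) * C (n + 1) * y ^ n) (y * S2) := by
    have h := H2.mul_left y
    have hfun : (fun n : ℕ => y * (((n : ℂ) + 2) * ((n : ℂ) + 1) * C (n + 2) * y ^ n))
        = fun n : ℕ => (((n + 1 : ℕ) : ℂ) + 1) * ((n + 1 : ℕ) : ℂ) * C ((n + 1) + 1) * y ^ (n + 1) := by
      funext n; push_cast; ring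
    rw [hfun] at h
    have h2 := (hasSum_nat_add_iff
      (f := fun n : ℕ => ((n : ℂ) + 1) * (n : ℂ) * C (n + 1) * y ^ n) 1).mp h
    simpa using h2
  have HzS1 : HasSum (fun n : ℕ => (n : ℂ) * C n * y ^ n) (y * S1) := by
    have h := H1.mul_left y
    have hfun : (fun n : ℕ => y * (((n : ℂ) + 1) * C (n + 1) * y ^ n))
        = fun n : ℕ => ((n + 1 : ℕ) : ℂ) * C (n + 1) * y ^ (n + 1) := by
      funext n; push_cast; ring
    rw [hfun] at h
    have h2 := (hasSum_nat_add_iff (f := fun n : ℕ => (n : ℂ) * C n * y ^ n) 1).mp h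
    simpa using h2
  have Hz2S2 : HasSum (fun n : ℕ => (n : ℂ) * ((n : ℂ) - 1) * C n * y ^ n) (y ^ 2 * S2) := by
    have h := H2.mul_left (y ^ 2)
    have hfun : (fun n : ℕ => y ^ 2 * (((n : ℂ) + 2) * ((n : ℂ) + 1) * C (n + 2) * y ^ n))
        = fun n : ℕ => ((n + 2 : ℕ) : ℂ) * (((n + 2 : ℕ) : ℂ) - 1) * C (n + 2) * y ^ (n + 2) := by
      funext n; push_cast; ring
    rw [hfun] at h
    have h2 := (hasSum_nat_add_iff
      (f := fun n : ℕ => (n : ℂ) * ((n : ℂ) - 1) * C n * y ^ n) 2).mp h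
    simpa [Finset.sum_range_succ] using h2
  have HA : HasSum (fun n : ℕ => ((n : ℂ) + 1) * ((n : ℂ) + c) * C (n + 1) * y ^ n)
      (y * S2 + c * S1) := by
    have h := HzS2.add (H1.mul_left c)
    have hfun : (fun n : ℕ => ((n : ℂ) + 1) * (n : ℂ) * C (n + 1) * y ^ n
          + c * (((n : ℂ) + 1) * C (n + 1) * y ^ n))
        = fun n : ℕ => ((n : ℂ) + 1) * ((n : ℂ) + c) * C (n + 1) * y ^ n := by
      funext n; ring
    rwa [hfun] at h
  have HB : HasSum (fun n : ℕ => ((n : ℂ) + 1) * ((n : ℂ) + c) * C (n + 1) * y ^ n)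
      (y ^ 2 * S2 + ((1 + a + b) * (y * S1) + a * b * S0)) := by
    have h := Hz2S2.add ((HzS1.mul_left (1 + a + b)).add (H0.mul_left (a * b)))
    have hfun : (fun n : ℕ => (n : ℂ) * ((n : ℂ) - 1) * C n * y ^ n
          + ((1 + a + b) * ((n : ℂ) * C n * y ^ n) + a * b * (C n * y ^ n)))
        = fun n : ℕ => ((n : ℂ) + 1) * ((n : ℂ) + c) * C (n + 1) * y ^ n := by
      funext n
      have hrec := MeAux.rec (a := a) (b := b) hc n
      rw [← hCdef] at hrec
      linear_combination (-(y ^ n)) * hrec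
    rwa [hfun] at h
  have eqn := HA.unique HB
  refine ⟨hdg, hdg2, ?_⟩
  linear_combination eqn

/-- `M^e_{κ,λ}(θ) = F(1-4/κ+s, 1-4/κ-s; 3/2-4/κ; sin²(θ/4))` is twice
differentiable and satisfies the generator-plus-λ equation
`λ M(θ) + ((κ-4)/2) cot(θ/2) M'(θ) + (κ/2) M''(θ) = 0` for `0 < |θ| < 2π`. -/
theorem Me_solves_generator_equation (κ : ℝ) (h1 : 8 / 3 < κ) (h2 : κ < 8)
    (lam s : ℂ) (hs : s ^ 2 = (1 - 4 / (κ : ℂ)) ^ 2 + 8 * lam / (κ : ℂ))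
    (M : ℝ → ℂ)
    (hM : M = fun θ : ℝ => ∑' n : ℕ,
      hypCoef (1 - 4 / (κ : ℂ) + s) (1 - 4 / (κ : ℂ) - s) (3 / 2 - 4 / (κ : ℂ)) n *
        (((Real.sin (θ / 4) : ℂ)) ^ 2) ^ n) :
    ∀ θ : ℝ, 0 < |θ| → |θ| < 2 * π →
      DifferentiableAt ℝ M θ ∧ DifferentiableAt ℝ (deriv M) θ ∧
      lam * M θ
        + (((κ : ℂ) - 4) / 2) * ((Real.cos (θ / 2) / Real.sin (θ / 2) : ℝ) : ℂ) * deriv M θ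
        + ((κ : ℂ) / 2) * deriv (deriv M) θ = 0 := by
  intro θ hθ1 hθ2
  have hπ : (0 : ℝ) < π := Real.pi_pos
  have hκpos : (0 : ℝ) < κ := by linarith
  have hκ0' : (κ : ℂ) ≠ 0 := Complex.ofReal_ne_zero.2 (by linarith)
  set a : ℂ := 1 - 4 / (κ : ℂ) + s with ha
  set b : ℂ := 1 - 4 / (κ : ℂ) - s with hb
  set c : ℂ := 3 / 2 - 4 / (κ : ℂ) with hcdef
  have hcpos : (0 : ℝ) < 3 / 2 - 4 / κ := by
    have : 4 / κ < 3 / 2 := by rw [div_lt_iff₀ hκpos]; linarith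
    linarith
  have hcr : ∀ n : ℕ, c + n = ((3 / 2 - 4 / κ + n : ℝ) : ℂ) := by
    intro n; rw [hcdef]; push_cast; ring
  have hc : ∀ n : ℕ, c + n ≠ 0 := by
    intro n
    rw [hcr n, Complex.ofReal_ne_zero]
    have : (0 : ℝ) ≤ n := Nat.cast_nonneg n
    positivity
  have hcn : ∀ n : ℕ, (n : ℝ) ≤ ‖c + n‖ := by
    intro n
    rw [hcr n, Complex.norm_real, Real.norm_eq_abs]
    have h0 : (0 : ℝ) ≤ n := Nat.cast_nonneg n
    calc (n : ℝ) ≤ 3 / 2 - 4 / κ + n := by linarith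
      _ ≤ |3 / 2 - 4 / κ + n| := le_abs_self _
  set p := FormalMultilinearSeries.ofScalars ℂ (hypCoef a b c) with hpdef
  set g := p.sum with hgdef
  have hMg : M = fun t : ℝ => g (((Real.sin (t / 4) : ℝ) : ℂ) ^ 2) := by
    rw [hM]
    funext t
    have : g (((Real.sin (t / 4) : ℝ) : ℂ) ^ 2)
        = ∑' n : ℕ, hypCoef a b c n * ((((Real.sin (t / 4) : ℝ) : ℂ)) ^ 2) ^ n := by
      rw [hgdef]
      exact tsum_congr fun n => by
        rw [hpdef, FormalMultilinearSeries.ofScalars_apply_eq, smul_eq_mul]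
    rw [this]
  -- region facts
  have hreg : ∀ t : ℝ, 0 < |t| → |t| < 2 * π →
      Real.sin (t / 4) ≠ 0 ∧ 0 < Real.cos (t / 4) ∧ Real.sin (t / 2) ≠ 0 := by
    intro t h1t h2t
    have hne : t ≠ 0 := abs_pos.mp h1t
    obtain ⟨hl, hr⟩ := abs_lt.mp h2t
    have hcos : 0 < Real.cos (t / 4) :=
      Real.cos_pos_of_mem_Ioo ⟨by linarith, by linarith⟩
    rcases lt_or_gt_of_ne hne with h | h
    · exact ⟨(Real.sin_neg_of_neg_of_neg_pi_lt (by linarith) (by linarith)).ne, hcos,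
        (Real.sin_neg_of_neg_of_neg_pi_lt (by linarith) (by linarith)).ne⟩
    · exact ⟨(Real.sin_pos_of_pos_of_lt_pi (by linarith) (by linarith)).ne', hcos,
        (Real.sin_pos_of_pos_of_lt_pi (by linarith) (by linarith)).ne'⟩
  have hznorm : ∀ t : ℝ, 0 < |t| → |t| < 2 * π →
      ‖(((Real.sin (t / 4) : ℝ) : ℂ) ^ 2)‖ < 1 := by
    intro t h1t h2t
    obtain ⟨-, hc4, -⟩ := hreg t h1t h2t
    rw [norm_pow, Complex.norm_real, Real.norm_eq_abs]
    have hpy := Real.sin_sq_add_cos_sq (t / 4)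
    have : |Real.sin (t / 4)| ^ 2 = Real.sin (t / 4) ^ 2 := sq_abs _
    nlinarith
  -- derivative of the inner function
  have hφ : ∀ t : ℝ, HasDerivAt (fun u : ℝ => ((Real.sin (u / 4) : ℝ) : ℂ) ^ 2)
      (((Real.sin (t / 2) : ℝ) : ℂ) / 4) t := by
    intro t
    have h1' : HasDerivAt (fun u : ℝ => Real.sin (u / 4)) (Real.cos (t / 4) * (1 / 4)) t := by
      have := (Real.hasDerivAt_sin (t / 4)).comp t ((hasDerivAt_id t).div_const 4)
      simpa [Function.comp_def] using this
    have h2 := h1'.ofReal_comp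
    have h3 := h2.mul h2
    have h4 : (fun u : ℝ => ((Real.sin (u / 4) : ℝ) : ℂ) ^ 2)
        = fun u : ℝ => ((Real.sin (u / 4) : ℝ) : ℂ) * ((Real.sin (u / 4) : ℝ) : ℂ) := by
      funext u; ring
    rw [h4]
    refine h3.congr_deriv ?_
    rw [show t / 2 = 2 * (t / 4) by ring, Real.sin_two_mul]
    push_cast
    ring
  -- derivative of M on the region
  have hMd : ∀ t : ℝ, 0 < |t| → |t| < 2 * π →
      HasDerivAt M ((((Real.sin (t / 2) : ℝ) : ℂ) / 4)
        * deriv g (((Real.sin (t / 4) : ℝ) : ℂ) ^ 2)) t := by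
    intro t h1t h2t
    obtain ⟨hs4, -, -⟩ := hreg t h1t h2t
    have hz0t : (((Real.sin (t / 4) : ℝ) : ℂ) ^ 2) ≠ 0 :=
      pow_ne_zero _ (Complex.ofReal_ne_zero.2 hs4)
    obtain ⟨hdgt, -, -⟩ := MeAux.key (a := a) (b := b) hc hcn (hznorm t h1t h2t) hz0t
    have hcomp := (hdgt.hasDerivAt).scomp_of_eq t (hφ t) rfl
    rw [hMg]
    simpa only [Function.comp_def, smul_eq_mul] using hcomp
  obtain ⟨hs4, hc4, hs2⟩ := hreg θ hθ1 hθ2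
  set z : ℂ := ((Real.sin (θ / 4) : ℝ) : ℂ) ^ 2 with hzdef
  have hz0 : z ≠ 0 := pow_ne_zero _ (Complex.ofReal_ne_zero.2 hs4)
  obtain ⟨hdg, hdg2, hODE⟩ := MeAux.key (a := a) (b := b) hc hcn (hznorm θ hθ1 hθ2) hz0
  rw [← hzdef] at hODE
  rw [← hpdef, ← hgdef] at hODE
  have hM1 := hMd θ hθ1 hθ2
  -- second derivative
  have hUopen : IsOpen {t : ℝ | 0 < |t| ∧ |t| < 2 * π} := by
    have : {t : ℝ | 0 < |t| ∧ |t| < 2 * π} = (fun t : ℝ => |t|) ⁻¹' (Set.Ioo 0 (2 * π)) := rfl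
    rw [this]
    exact continuous_abs.isOpen_preimage _ isOpen_Ioo
  have hU : {t : ℝ | 0 < |t| ∧ |t| < 2 * π} ∈ nhds θ := hUopen.mem_nhds ⟨hθ1, hθ2⟩
  have hev : deriv M =ᶠ[nhds θ] fun t : ℝ => (((Real.sin (t / 2) : ℝ) : ℂ) / 4)
      * deriv g (((Real.sin (t / 4) : ℝ) : ℂ) ^ 2) :=
    Filter.eventuallyEq_of_mem hU fun t ht => (hMd t ht.1 ht.2).deriv
  have h5 : HasDerivAt (fun t : ℝ => (((Real.sin (t / 2) : ℝ) : ℂ) / 4))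
      (((Real.cos (θ / 2) : ℝ) : ℂ) / 8) θ := by
    have h1' : HasDerivAt (fun u : ℝ => Real.sin (u / 2)) (Real.cos (θ / 2) * (1 / 2)) θ := by
      have := (Real.hasDerivAt_sin (θ / 2)).comp θ ((hasDerivAt_id θ).div_const 2)
      simpa [Function.comp_def] using this
    have h3 := h1'.ofReal_comp.div_const 4
    refine h3.congr_deriv ?_
    push_cast
    ring
  have h6 : HasDerivAt (fun t : ℝ => deriv g (((Real.sin (t / 4) : ℝ) : ℂ) ^ 2))
      ((((Real.sin (θ / 2) : ℝ) : ℂ) / 4) * deriv (deriv g) z) θ := by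
    have := (hdg2.hasDerivAt).scomp_of_eq θ (hφ θ) rfl
    simpa only [Function.comp_def, smul_eq_mul] using this
  have hN := h5.mul h6
  have hM2 : HasDerivAt (deriv M)
      ((((Real.cos (θ / 2) : ℝ) : ℂ) / 8) * deriv g z
        + (((Real.sin (θ / 2) : ℝ) : ℂ) / 4)
          * ((((Real.sin (θ / 2) : ℝ) : ℂ) / 4) * deriv (deriv g) z)) θ :=
    hN.congr_of_eventuallyEq hev
  refine ⟨hM1.differentiableAt, hM2.differentiableAt, ?_⟩
  rw [hM1.deriv, hM2.deriv, show M θ = g z by rw [hMg]]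
  -- now pure algebra
  set G := g z
  set D1 := deriv g z
  set D2 := deriv (deriv g) z
  have e2 : ((Real.sin (θ / 2) : ℝ) : ℂ) ≠ 0 := Complex.ofReal_ne_zero.2 hs2
  have e3 : ((Real.cos (θ / 2) : ℝ) : ℂ) = 1 - 2 * z := by
    have hr : Real.cos (θ / 2) = 1 - 2 * Real.sin (θ / 4) ^ 2 := by
      rw [show θ / 2 = 2 * (θ / 4) by ring, Real.cos_two_mul]
      have := Real.sin_sq_add_cos_sq (θ / 4)
      linarith
    rw [hr, hzdef]
    push_cast
    ring
  have e4 : ((Real.sin (θ / 2) : ℝ) : ℂ) ^ 2 = 4 * z * (1 - z) := by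
    have hr : Real.sin (θ / 2) ^ 2
        = 4 * Real.sin (θ / 4) ^ 2 * (1 - Real.sin (θ / 4) ^ 2) := by
      rw [show θ / 2 = 2 * (θ / 4) by ring, Real.sin_two_mul]
      linear_combination (4 * Real.sin (θ / 4) ^ 2) * Real.sin_sq_add_cos_sq (θ / 4)
    calc ((Real.sin (θ / 2) : ℝ) : ℂ) ^ 2 = ((Real.sin (θ / 2) ^ 2 : ℝ) : ℂ) := by push_cast; ring
      _ = 4 * z * (1 - z) := by rw [hr, hzdef]; push_cast; ring
  have e1 : ((Real.cos (θ / 2) / Real.sin (θ / 2) : ℝ) : ℂ)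
      = ((Real.cos (θ / 2) : ℝ) : ℂ) / ((Real.sin (θ / 2) : ℝ) : ℂ) := by push_cast; ring
  rw [e1, e3]
  field_simp at hs
  have hab : a * b = -(8 * lam) / (κ : ℂ) := by
    rw [ha, hb]
    field_simp
    linear_combination -hs
  have hsum : (1 : ℂ) + a + b = 3 - 8 / (κ : ℂ) := by rw [ha, hb]; ring
  rw [hab, hsum, hcdef] at hODE
  set S := ((Real.sin (θ / 2) : ℝ) : ℂ) with hSdef
  clear_value S
  clear_value z G D1 D2
  field_simp at hODE
  have hODE2 : 2 * (κ : ℂ) * (z * (1 - z) * D2) + (3 * (κ : ℂ) - 8) * (1 - 2 * z) * D1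
      + 16 * lam * G = 0 := by
    have hfac : (κ : ℂ) ^ 2 * (2 * (κ : ℂ) * (z * (1 - z) * D2)
        + (3 * (κ : ℂ) - 8) * (1 - 2 * z) * D1 + 16 * lam * G) = 0 := by
      linear_combination (κ : ℂ) ^ 2 * hODE
    exact (mul_eq_zero.mp hfac).resolve_left (pow_ne_zero _ hκ0')
  have eS : (1 - 2 * z) / S * S = 1 - 2 * z := div_mul_cancel₀ (1 - 2 * z) e2
  linear_combination (1 / 16 : ℂ) * hODE2 + (((κ : ℂ) - 4) / 8 * D1) * eS + ((κ : ℂ) / 32 * D2) * e4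
end

section
/- Let κ be a real number with 8/3 < κ < 8, let λ ∈ ℂ, let s′ ∈ ℂ satisfy s′² = (1/2 − 2/κ)² + 2λ/κ, and define M^o_{κ,λ}(θ) = F(1 − 2/κ + s′, 1 − 2/κ − s′; 3/2; cos²(θ/2))·cos(θ/2) for real θ. Then for every real θ with 0 < θ < 2π, the function M^o_{κ,λ} is twice differentiable at θ and satisfies λ·M^o_{κ,λ}(θ) + ((κ − 4)/2)·cot(θ/2)·(M^o_{κ,λ})′(θ) + (κ/2)·(M^o_{κ,λ})″(θ) = 0. -/
open scoped Real

lemma aux_summable (k : ℕ) {s : ℝ} (h0 : 0 < s) (h1 : s < 1) :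
    Summable (fun n : ℕ => ((n : ℝ) + 1) ^ k * s ^ n) := by
  have h := summable_pow_mul_geometric_of_norm_lt_one (R := ℝ) k
    (r := s) (by rwa [Real.norm_eq_abs, abs_of_nonneg h0.le])
  have h2 : Summable (fun n : ℕ => ((n + 1 : ℕ) : ℝ) ^ k * s ^ (n + 1)) :=
    (summable_nat_add_iff 1).2 h
  have h3 := h2.mul_left (1 / s)
  refine h3.congr fun n => ?_
  push_cast
  field_simp
  ring

lemma poch32_ne (n : ℕ) : (ascPochhammer ℂ n).eval (3/2 : ℂ) ≠ 0 := by
  induction n with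
  | zero => simp
  | succ n ih =>
    rw [ascPochhammer_succ_eval]
    refine mul_ne_zero ih ?_
    have : ((3/2 + n : ℝ) : ℂ) ≠ 0 := by
      exact_mod_cast (by positivity : (3/2 + (n:ℝ)) ≠ 0)
    push_cast at this ⊢
    convert this using 1
lemma poch32_norm (n : ℕ) : ‖(3/2 : ℂ) + n‖ = 3/2 + n := by
  have : ((3/2 : ℂ) + n) = ((3/2 + n : ℝ) : ℂ) := by push_cast; ring
  rw [this, Complex.norm_real, Real.norm_eq_abs, abs_of_pos (by positivity)]

lemma hypCoef_rec (a b : ℂ) (n : ℕ) :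
    hypCoef a b (3/2) (n + 1) =
      hypCoef a b (3/2) n * ((a + n) * (b + n) / (((3:ℂ)/2 + n) * (n + 1))) := by
  have h32 : ((3:ℂ)/2 + n) ≠ 0 := by
    have := poch32_norm n
    intro h; rw [h] at this; simp at this; linarith [this, (by positivity : (0:ℝ) < 3/2 + n)]
  unfold hypCoef
  rw [ascPochhammer_succ_eval, ascPochhammer_succ_eval, ascPochhammer_succ_eval,
    Nat.factorial_succ]
  have hf : ((n.factorial : ℂ)) ≠ 0 := by exact_mod_cast n.factorial_ne_zero
  have hp := poch32_ne n
  push_cast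
  field_simp
lemma hypCoef_bound (a b : ℂ) (m : ℕ) (ha : ‖a‖ ≤ m) (hb : ‖b‖ ≤ m) :
    ∀ n : ℕ, ‖hypCoef a b (3/2) n‖ ≤ ((n : ℝ) + 1) ^ (2 * m) := by
  intro n
  induction n with
  | zero => simp [hypCoef]
  | succ n ih =>
    rw [hypCoef_rec]
    have hna : ‖a + (n:ℂ)‖ ≤ (n : ℝ) + m := by
      calc ‖a + (n:ℂ)‖ ≤ ‖a‖ + ‖(n:ℂ)‖ := norm_add_le _ _
        _ ≤ (m:ℝ) + n := by simp; exact ha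
        _ = (n:ℝ) + m := by ring
    have hnb : ‖b + (n:ℂ)‖ ≤ (n : ℝ) + m := by
      calc ‖b + (n:ℂ)‖ ≤ ‖b‖ + ‖(n:ℂ)‖ := norm_add_le _ _
        _ ≤ (m:ℝ) + n := by simp; exact hb
        _ = (n:ℝ) + m := by ring
    have hden : ((n:ℝ) + 1) * ((n:ℝ) + 1) ≤ ‖((3:ℂ)/2 + n) * ((n:ℂ) + 1)‖ := by
      rw [norm_mul, poch32_norm]
      have : ‖((n:ℂ) + 1)‖ = (n:ℝ) + 1 := by
        rw [show ((n:ℂ) + 1) = (((n:ℝ) + 1 : ℝ) : ℂ) by push_cast; ring,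
          Complex.norm_real, Real.norm_eq_abs, abs_of_pos (by positivity)]
      rw [this]
      nlinarith [(by positivity : (0:ℝ) < (n:ℝ)+1)]
    have key : ((n:ℝ) + m) * ((n:ℝ) + 1) ^ m ≤ ((n:ℝ) + 2) ^ m * ((n:ℝ) + 1) := by
      have h0 : (0:ℝ) ≤ 1 / ((n:ℝ) + 1) := by positivity
      have hber : 1 + (m : ℝ) * (1 / ((n:ℝ) + 1)) ≤ (1 + 1 / ((n:ℝ) + 1)) ^ m :=
        one_add_mul_le_pow (by linarith) m
      have hpos : (0:ℝ) < (n:ℝ) + 1 := by positivity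
      have hrw : (1 + 1 / ((n:ℝ) + 1)) = ((n:ℝ) + 2) / ((n:ℝ) + 1) := by field_simp; ring
      rw [hrw, div_pow] at hber
      have hppos : (0:ℝ) < ((n:ℝ)+1) ^ m := by positivity
      calc ((n:ℝ) + m) * ((n:ℝ) + 1) ^ m ≤ ((n:ℝ) + 1 + m) * ((n:ℝ)+1)^m := by nlinarith
        _ = (1 + (m:ℝ) * (1/((n:ℝ)+1))) * (((n:ℝ)+1) * ((n:ℝ)+1)^m) := by field_simp
        _ ≤ (((n:ℝ)+2)^m / ((n:ℝ)+1)^m) * (((n:ℝ)+1) * ((n:ℝ)+1)^m) := by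
            exact mul_le_mul_of_nonneg_right hber (by positivity)
        _ = ((n:ℝ)+2)^m * ((n:ℝ)+1) := by field_simp
    -- now combine
    have hnn : (0:ℝ) ≤ (n:ℝ) + m := by positivity
    have hnormstep : ‖hypCoef a b (3/2) n * ((a + n) * (b + n) / (((3:ℂ)/2 + n) * (n + 1)))‖
        ≤ ((n:ℝ)+1)^(2*m) * (((n:ℝ)+m) * ((n:ℝ)+m) / (((n:ℝ)+1) * ((n:ℝ)+1))) := by
      rw [norm_mul, norm_div]
      have h1 : ‖(a + (n:ℂ)) * (b + (n:ℂ))‖ ≤ ((n:ℝ)+m) * ((n:ℝ)+m) := by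
        rw [norm_mul]; exact mul_le_mul hna hnb (norm_nonneg _) hnn
      have hdenpos : (0:ℝ) < ((n:ℝ)+1) * ((n:ℝ)+1) := by positivity
      have h2 : ‖(a + (n:ℂ)) * (b + (n:ℂ))‖ / ‖((3:ℂ)/2 + n) * ((n:ℂ) + 1)‖
          ≤ (((n:ℝ)+m) * ((n:ℝ)+m)) / (((n:ℝ)+1) * ((n:ℝ)+1)) :=
        div_le_div₀ (by positivity) h1 hdenpos hden
      exact mul_le_mul ih h2 (by positivity) (by positivity)
    refine hnormstep.trans ?_
    -- ((n+1)^(2m) (n+m)²/(n+1)²) ≤ (n+2)^{2m}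
    have hkey2 : (((n:ℝ)+m) * ((n:ℝ)+1)^m) * (((n:ℝ)+m) * ((n:ℝ)+1)^m)
        ≤ (((n:ℝ)+2)^m * ((n:ℝ)+1)) * (((n:ℝ)+2)^m * ((n:ℝ)+1)) :=
      mul_self_le_mul_self (by positivity) key
    have hpm : ((n:ℝ)+1)^(2*m) = ((n:ℝ)+1)^m * ((n:ℝ)+1)^m := by
      rw [two_mul, pow_add]
    have hpm2 : (((n:ℕ)+1:ℕ):ℝ) + 1 = (n:ℝ) + 2 := by push_cast; ring
    rw [hpm2, show (2*m) = m + m from two_mul m, pow_add, pow_add,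
      mul_div_assoc', div_le_iff₀ (by positivity : (0:ℝ) < ((n:ℝ)+1) * ((n:ℝ)+1))]
    nlinarith [hkey2, (by positivity : (0:ℝ) < ((n:ℝ)+1)^m)]
lemma hypCoef_kappa_rec (κ : ℝ) (hκ : (κ:ℂ) ≠ 0) (lam s' : ℂ)
    (hs : s' ^ 2 = (1 / 2 - 2 / (κ : ℂ)) ^ 2 + 2 * lam / (κ : ℂ)) (n : ℕ) :
    (κ:ℂ) * hypCoef (1 - 2/(κ:ℂ) + s') (1 - 2/(κ:ℂ) - s') (3/2) (n+1) * ((2*n+3) * (2*n+2))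
      = hypCoef (1 - 2/(κ:ℂ) + s') (1 - 2/(κ:ℂ) - s') (3/2) n *
        ((κ:ℂ)*(2*n+1)*(2*n+3) - 8*(2*n+1) - 8*lam) := by
  have hs2 : (κ:ℂ)^2 * s'^2 = ((κ:ℂ) - 4)^2/4 + 2*lam*(κ:ℂ) := by
    rw [hs]; field_simp; ring
  rw [hypCoef_rec]
  have h32 : ((3:ℂ)/2 + n) ≠ 0 := by
    intro h
    have h' := congrArg Complex.re h
    push_cast at h'
    simp [Complex.add_re] at h'
    have : (0:ℝ) ≤ (n:ℝ) := Nat.cast_nonneg n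
    linarith
  have hn1 : ((n:ℂ) + 1) ≠ 0 := by
    have : ((n+1 : ℕ):ℂ) ≠ 0 := Nat.cast_ne_zero.mpr (Nat.succ_ne_zero n)
    push_cast at this; exact this
  set C := hypCoef (1 - 2/(κ:ℂ) + s') (1 - 2/(κ:ℂ) - s') (3/2) n with hC
  clear_value C
  have hcancel0 : ∀ z : ℂ, z / (((3:ℂ)/2+n)*((n:ℂ)+1)) * ((2*(n:ℂ)+3)*(2*(n:ℂ)+2)) = 4 * z := by
    intro z
    rw [div_mul_eq_mul_div, div_eq_iff (mul_ne_zero h32 hn1)]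
    ring
  have hcancel := hcancel0 ((1 - 2/(κ:ℂ) + s' + n) * (1 - 2/(κ:ℂ) - s' + n))
  have key : (κ:ℂ) * (4 * ((1 - 2/(κ:ℂ) + s' + n) * (1 - 2/(κ:ℂ) - s' + n)))
      = (κ:ℂ)*(2*n+1)*(2*n+3) - 8*(2*n+1) - 8*lam := by
    have expand : (1 - 2/(κ:ℂ) + s' + n) * (1 - 2/(κ:ℂ) - s' + n)
        = (1 - 2/(κ:ℂ) + n)^2 - s'^2 := by ring
    rw [expand, hs]
    field_simp
    ring
  calc (κ:ℂ) * (C * ((1 - 2/(κ:ℂ) + s' + n) * (1 - 2/(κ:ℂ) - s' + n) / (((3:ℂ)/2+n)*((n:ℂ)+1)))) * ((2*(n:ℂ)+3)*(2*(n:ℂ)+2))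
      = C * (((1 - 2/(κ:ℂ) + s' + n) * (1 - 2/(κ:ℂ) - s' + n) / (((3:ℂ)/2+n)*((n:ℂ)+1))) * ((2*(n:ℂ)+3)*(2*(n:ℂ)+2))) * (κ:ℂ) := by ring
    _ = C * (4 * ((1 - 2/(κ:ℂ) + s' + n) * (1 - 2/(κ:ℂ) - s' + n))) * (κ:ℂ) := by rw [hcancel]
    _ = C * ((κ:ℂ) * (4 * ((1 - 2/(κ:ℂ) + s' + n) * (1 - 2/(κ:ℂ) - s' + n)))) := by ring
    _ = C * ((κ:ℂ)*(2*n+1)*(2*n+3) - 8*(2*n+1) - 8*lam) := by rw [key]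
lemma tele_id (κ lam c0 c1 xx ss : ℂ) (hss : ss ≠ 0) (hx2 : ss^2 = 1 - xx^2) (n : ℕ)
    (E : κ * c1 * ((2*(n:ℂ)+3) * (2*(n:ℂ)+2))
      = c0 * (κ*(2*(n:ℂ)+1)*(2*(n:ℂ)+3) - 8*(2*(n:ℂ)+1) - 8*lam)) :
    lam * (c0 * xx^(2*n+1))
      + ((κ-4)/2) * (xx/ss) * (c0 * (2*(n:ℂ)+1) * xx^(2*n) * (-ss/2))
      + (κ/2) * (c0 * (2*(n:ℂ)+1) * ((2*(n:ℂ)) * xx^(2*n-1) * (-ss/2) * (-ss/2) + xx^(2*n) * (-xx/4)))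
    = κ/8 * c0 * (2*(n:ℂ)+1) * (2*(n:ℂ)) * xx^(2*n-1)
      - κ/8 * c1 * ((2*(n:ℂ)+3) * (2*(n:ℂ)+2)) * xx^(2*n+1) := by
  have hmid : ((κ-4)/2) * (xx/ss) * (c0 * (2*(n:ℂ)+1) * xx^(2*n) * (-ss/2))
      = -((κ-4)/4) * (c0 * (2*(n:ℂ)+1) * (xx^(2*n) * xx)) := by
    field_simp; ring
  rw [hmid]
  rcases n with _ | k
  · norm_num
    linear_combination (xx/8) * E
  · rw [show 2*(k+1)-1 = 2*k+1 from by omega]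
    push_cast at E ⊢
    linear_combination ((κ/8) * c0 * (2*(k:ℂ)+3) * (2*(k:ℂ)+2) * xx^(2*k+1)) * hx2
      + (xx^(2*k+3)/8) * E

noncomputable def XXc (θ : ℝ) : ℂ := (Real.cos (θ/2) : ℂ)
noncomputable def DDc (θ : ℝ) : ℂ := -((Real.sin (θ/2) : ℂ))/2

lemma hasDerivAt_XXc (θ : ℝ) : HasDerivAt XXc (DDc θ) θ := by
  have h1 : HasDerivAt (fun θ : ℝ => θ/2) (1/2) θ := (hasDerivAt_id θ).div_const 2
  have h2 : HasDerivAt (fun θ : ℝ => Real.cos (θ/2)) (-Real.sin (θ/2) * (1/2)) θ :=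
    by have := (Real.hasDerivAt_cos (θ/2)).comp θ h1; exact this
  have h3 := h2.ofReal_comp
  refine h3.congr_deriv ?_
  unfold DDc
  push_cast
  ring

lemma hasDerivAt_DDc (θ : ℝ) : HasDerivAt DDc (-XXc θ/4) θ := by
  have h1 : HasDerivAt (fun θ : ℝ => θ/2) (1/2) θ := (hasDerivAt_id θ).div_const 2
  have h2 : HasDerivAt (fun θ : ℝ => Real.sin (θ/2)) (Real.cos (θ/2) * (1/2)) θ :=
    by have := (Real.hasDerivAt_sin (θ/2)).comp θ h1; exact this
  have h3 := h2.ofReal_comp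
  have h4 := (h3.div_const (2:ℂ)).neg
  convert h4 using 1
  · rfl
  · funext x
    unfold DDc
    simp only [Pi.neg_apply]
    ring
  · unfold XXc
    push_cast
    ring

noncomputable def fF (c : ℕ → ℂ) (n : ℕ) (θ : ℝ) : ℂ := c n * XXc θ ^ (2*n+1)
noncomputable def fF1 (c : ℕ → ℂ) (n : ℕ) (θ : ℝ) : ℂ :=
  c n * (2*(n:ℂ)+1) * XXc θ ^ (2*n) * DDc θ
noncomputable def fF2 (c : ℕ → ℂ) (n : ℕ) (θ : ℝ) : ℂ :=
  c n * (2*(n:ℂ)+1) * ((2*(n:ℂ)) * XXc θ ^ (2*n-1) * DDc θ * DDc θ + XXc θ ^ (2*n) * (-XXc θ/4))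

lemma hasDerivAt_XXc_pow (k : ℕ) (θ : ℝ) :
    HasDerivAt (fun θ' => XXc θ' ^ k) ((k:ℂ) * XXc θ^(k-1) * DDc θ) θ := by
  induction k with
  | zero => simpa using hasDerivAt_const θ (1:ℂ)
  | succ k ih =>
    have h := ih.mul (hasDerivAt_XXc θ)
    have hf : (fun θ' : ℝ => XXc θ' ^ (k+1)) = fun θ' => XXc θ' ^ k * XXc θ' := by
      funext x; rw [pow_succ]
    rw [hf, show k+1-1 = k from rfl]
    refine h.congr_deriv ?_
    rcases k with _ | j
    · norm_num
    · rw [show j+1-1 = j from rfl]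
      push_cast
      ring

lemma hasDerivAt_fF (c : ℕ → ℂ) (n : ℕ) (θ : ℝ) : HasDerivAt (fF c n) (fF1 c n θ) θ := by
  have h := (hasDerivAt_XXc_pow (2*n+1) θ).const_mul (c n)
  refine h.congr_deriv ?_
  unfold fF1
  push_cast
  ring

lemma hasDerivAt_fF1 (c : ℕ → ℂ) (n : ℕ) (θ : ℝ) : HasDerivAt (fF1 c n) (fF2 c n θ) θ := by
  have h := ((hasDerivAt_XXc_pow (2*n) θ).mul (hasDerivAt_DDc θ)).const_mul
    (c n * (2*(n:ℂ)+1))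
  convert h using 1
  · rfl
  · funext x
    unfold fF1
    simp only [Pi.mul_apply]
    ring
  · unfold fF2
    push_cast
    ring

lemma norm_XXc_le (θ : ℝ) : ‖XXc θ‖ ≤ 1 := by
  unfold XXc
  rw [Complex.norm_real, Real.norm_eq_abs]
  exact Real.abs_cos_le_one _

lemma norm_DDc_le (θ : ℝ) : ‖DDc θ‖ ≤ 1/2 := by
  unfold DDc
  rw [norm_div, norm_neg, Complex.norm_real, Real.norm_eq_abs]
  simp only [Complex.norm_ofNat]
  have h := Real.abs_sin_le_one (θ/2)
  calc |Real.sin (θ/2)| / 2 ≤ 1/2 := by linarith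
    _ = 1/2 := rfl

lemma norm_natc (n : ℕ) : ‖2*(n:ℂ)+1‖ = 2*(n:ℝ)+1 := by
  have : (2*(n:ℂ)+1) = ((2*(n:ℝ)+1 : ℝ) : ℂ) := by push_cast; ring
  rw [this, Complex.norm_real, Real.norm_eq_abs, abs_of_pos (by positivity)]

lemma rpow_sub_le {r : ℝ} (hr0 : 0 < r) (hr1 : r ≤ 1) (n : ℕ) :
    r^(2*n-1) ≤ (1/r) * (r^2)^n := by
  rcases n with _ | k
  · simpa using (one_le_one_div hr0 hr1)
  · rw [show 2*(k+1)-1 = 2*k+1 from by omega]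
    have h : (1/r) * (r^2)^(k+1) = r^(2*k+1) := by
      rw [← pow_mul]
      rw [show 2*(k+1) = (2*k+1)+1 from by omega, pow_succ]
      field_simp
    rw [h]

lemma norm_fF_le (c : ℕ → ℂ) (m : ℕ) (hc : ∀ n, ‖c n‖ ≤ ((n:ℝ)+1)^(2*m))
    {r : ℝ} {θ : ℝ} (hr0 : 0 < r) (hr1 : r ≤ 1) (hX : ‖XXc θ‖ ≤ r) (n : ℕ) :
    ‖fF c n θ‖ ≤ ((n:ℝ)+1)^(2*m) * (r^2)^n := by
  unfold fF
  rw [norm_mul, norm_pow]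
  have hrr : r^(2*n+1) = (r^2)^n * r := by rw [pow_succ, pow_mul]
  calc ‖c n‖ * ‖XXc θ‖^(2*n+1) ≤ ((n:ℝ)+1)^(2*m) * r^(2*n+1) :=
        mul_le_mul (hc n) (pow_le_pow_left₀ (norm_nonneg _) hX _) (by positivity) (by positivity)
    _ = ((n:ℝ)+1)^(2*m) * ((r^2)^n * r) := by rw [hrr]
    _ ≤ ((n:ℝ)+1)^(2*m) * ((r^2)^n * 1) := by gcongr
    _ = ((n:ℝ)+1)^(2*m) * (r^2)^n := by ring

lemma norm_fF1_le (c : ℕ → ℂ) (m : ℕ) (hc : ∀ n, ‖c n‖ ≤ ((n:ℝ)+1)^(2*m))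
    {r : ℝ} {θ : ℝ} (hr0 : 0 < r) (hr1 : r ≤ 1) (hX : ‖XXc θ‖ ≤ r) (n : ℕ) :
    ‖fF1 c n θ‖ ≤ ((n:ℝ)+1)^(2*m+1) * (r^2)^n := by
  unfold fF1
  rw [norm_mul, norm_mul, norm_mul, norm_pow, norm_natc]
  calc ‖c n‖ * (2*(n:ℝ)+1) * ‖XXc θ‖^(2*n) * ‖DDc θ‖
      ≤ ((n:ℝ)+1)^(2*m) * (2*(n:ℝ)+1) * r^(2*n) * (1/2) := by
        gcongr <;> first
          | exact hc n
          | exact norm_DDc_le θ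
          | exact hX
          | exact pow_le_pow_left₀ (norm_nonneg _) hX _
    _ ≤ ((n:ℝ)+1)^(2*m) * (((n:ℝ)+1) * (r^2)^n) := by
        have hre : r^(2*n) = (r^2)^n := pow_mul r 2 n
        rw [hre]
        nlinarith [pow_nonneg (by positivity : (0:ℝ) ≤ r^2) n,
          pow_nonneg (by positivity : (0:ℝ) ≤ (n:ℝ)+1) (2*m)]
    _ = ((n:ℝ)+1)^(2*m+1) * (r^2)^n := by rw [pow_succ]; ring

lemma norm_fF2_le (c : ℕ → ℂ) (m : ℕ) (hc : ∀ n, ‖c n‖ ≤ ((n:ℝ)+1)^(2*m))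
    {r : ℝ} {θ : ℝ} (hr0 : 0 < r) (hr1 : r ≤ 1) (hX : ‖XXc θ‖ ≤ r) (n : ℕ) :
    ‖fF2 c n θ‖ ≤ (1/r) * ((n:ℝ)+1)^(2*m+2) * (r^2)^n := by
  unfold fF2
  have hD := norm_DDc_le θ
  have hXn : ∀ k : ℕ, ‖XXc θ ^ k‖ ≤ r^k := by
    intro k; rw [norm_pow]; exact pow_le_pow_left₀ (norm_nonneg _) hX k
  have hA : ‖(2*(n:ℂ)) * XXc θ ^ (2*n-1) * DDc θ * DDc θ‖
      ≤ (2*(n:ℝ)) * r^(2*n-1) * (1/2) * (1/2) := by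
    rw [norm_mul, norm_mul, norm_mul]
    have h2n : ‖(2*(n:ℂ))‖ = 2*(n:ℝ) := by
      have : (2*(n:ℂ)) = ((2*(n:ℝ) : ℝ) : ℂ) := by push_cast; ring
      rw [this, Complex.norm_real, Real.norm_eq_abs, abs_of_nonneg (by positivity)]
    rw [h2n]
    gcongr <;> first
      | exact hD
      | exact hXn _
      | exact pow_le_pow_left₀ (norm_nonneg _) hX _
  have hB : ‖XXc θ ^ (2*n) * (-XXc θ/4)‖ ≤ r^(2*n) * (r/4) := by
    rw [norm_mul]
    have hb2 : ‖-XXc θ/4‖ ≤ r/4 := by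
      rw [norm_div, norm_neg]
      simp only [Complex.norm_ofNat]
      linarith
    exact mul_le_mul (hXn _) hb2 (norm_nonneg _) (by positivity)
  rw [norm_mul, norm_mul, norm_natc]
  have hsum : ‖(2*(n:ℂ)) * XXc θ ^ (2*n-1) * DDc θ * DDc θ + XXc θ ^ (2*n) * (-XXc θ/4)‖
      ≤ (2*(n:ℝ)) * r^(2*n-1) * (1/2) * (1/2) + r^(2*n) * (r/4) :=
    (norm_add_le _ _).trans (add_le_add hA hB)
  have hr2n : r^(2*n) * (r/4) ≤ r^(2*n-1) * (1/4) := by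
    have : r^(2*n) * r ≤ r^(2*n-1) := by
      rcases n with _ | k
      · simpa using (by nlinarith : r^0 * r ≤ 1)
      · rw [show 2*(k+1)-1 = 2*k+1 from by omega, show 2*(k+1) = (2*k+1)+1 from by omega,
          pow_succ]
        nlinarith [pow_nonneg hr0.le (2*k+1), (pow_le_one₀ hr0.le hr1 : r^(2*k+1) ≤ 1),
          mul_le_one₀ hr1 hr0.le hr1]
    nlinarith
  have key : ‖c n‖ * ((2*(n:ℝ)+1) * ‖(2*(n:ℂ)) * XXc θ ^ (2*n-1) * DDc θ * DDc θ + XXc θ ^ (2*n) * (-XXc θ/4)‖)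
      ≤ ((n:ℝ)+1)^(2*m) * ((2*(n:ℝ)+1) * ((2*(n:ℝ)+1) * (r^(2*n-1) * (1/4)))) := by
    gcongr
    · exact hc n
    · calc ‖(2*(n:ℂ)) * XXc θ ^ (2*n-1) * DDc θ * DDc θ + XXc θ ^ (2*n) * (-XXc θ/4)‖
          ≤ (2*(n:ℝ)) * r^(2*n-1) * (1/2) * (1/2) + r^(2*n) * (r/4) := hsum
        _ ≤ (2*(n:ℝ)) * r^(2*n-1) * (1/2) * (1/2) + r^(2*n-1) * (1/4) := by linarith
        _ = (2*(n:ℝ)+1) * (r^(2*n-1) * (1/4)) := by ring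
  rw [mul_assoc]
  refine key.trans ?_
  have hps := rpow_sub_le hr0 hr1 n
  have h1 : (2*(n:ℝ)+1) * ((2*(n:ℝ)+1) * (r^(2*n-1) * (1/4)))
      ≤ ((n:ℝ)+1)^2 * ((1/r) * (r^2)^n) := by
    have h4 : (2*(n:ℝ)+1) * (2*(n:ℝ)+1) * (1/4) ≤ ((n:ℝ)+1)^2 := by nlinarith
    have hrp : (0:ℝ) ≤ r^(2*n-1) := pow_nonneg hr0.le _
    nlinarith [mul_le_mul_of_nonneg_right h4 hrp,
      mul_le_mul_of_nonneg_left hps (by positivity : (0:ℝ) ≤ ((n:ℝ)+1)^2)]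
  calc ((n:ℝ)+1)^(2*m) * ((2*(n:ℝ)+1) * ((2*(n:ℝ)+1) * (r^(2*n-1) * (1/4))))
      ≤ ((n:ℝ)+1)^(2*m) * (((n:ℝ)+1)^2 * ((1/r) * (r^2)^n)) := by gcongr
    _ = (1/r) * ((n:ℝ)+1)^(2*m+2) * (r^2)^n := by rw [pow_add]; ring


noncomputable def VV (κ : ℝ) (c : ℕ → ℂ) (θ : ℝ) (n : ℕ) : ℂ :=
  (κ:ℂ)/8 * c n * (2*(n:ℂ)+1) * (2*(n:ℂ)) * XXc θ^(2*n-1)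

lemma VV_succ (κ : ℝ) (c : ℕ → ℂ) (θ : ℝ) (n : ℕ) :
    VV κ c θ (n+1) = (κ:ℂ)/8 * c (n+1) * ((2*(n:ℂ)+3)*(2*(n:ℂ)+2)) * XXc θ^(2*n+1) := by
  unfold VV
  rw [show 2*(n+1)-1 = 2*n+1 from by omega]
  push_cast
  ring

lemma VV_zero (κ : ℝ) (c : ℕ → ℂ) (θ : ℝ) : VV κ c θ 0 = 0 := by
  unfold VV
  norm_num

lemma rpow_sub_le' {r : ℝ} (hr0 : 0 < r) (hr1 : r ≤ 1) (n : ℕ) :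
    r^(2*n-1) ≤ (1/r) * (r^2)^n := by
  rcases n with _ | k
  · simpa using (one_le_one_div hr0 hr1)
  · rw [show 2*(k+1)-1 = 2*k+1 from by omega]
    have h : (1/r) * (r^2)^(k+1) = r^(2*k+1) := by
      rw [← pow_mul, show 2*(k+1) = (2*k+1)+1 from by omega, pow_succ]
      field_simp
    rw [h]

lemma norm_VV_le (κ : ℝ) (c : ℕ → ℂ) (m : ℕ) (hc : ∀ n, ‖c n‖ ≤ ((n:ℝ)+1)^(2*m))
    {r θ : ℝ} (hr0 : 0 < r) (hr1 : r ≤ 1) (hX : ‖XXc θ‖ ≤ r) (n : ℕ) :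
    ‖VV κ c θ n‖ ≤ (|κ|/2) * (((n:ℝ)+1)^(2*m+2) * ((1/r) * (r^2)^n)) := by
  unfold VV
  have h8 : ‖(κ:ℂ)/8‖ = |κ|/8 := by
    rw [norm_div, Complex.norm_real, Real.norm_eq_abs]
    norm_num
  have h2n1 : ‖2*(n:ℂ)+1‖ = 2*(n:ℝ)+1 := by
    have : (2*(n:ℂ)+1) = ((2*(n:ℝ)+1 : ℝ) : ℂ) := by push_cast; ring
    rw [this, Complex.norm_real, Real.norm_eq_abs, abs_of_pos (by positivity)]
  have h2n : ‖(2*(n:ℂ))‖ = 2*(n:ℝ) := by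
    have : (2*(n:ℂ)) = ((2*(n:ℝ) : ℝ) : ℂ) := by push_cast; ring
    rw [this, Complex.norm_real, Real.norm_eq_abs, abs_of_nonneg (by positivity)]
  rw [norm_mul, norm_mul, norm_mul, norm_mul, norm_pow, h8, h2n1, h2n]
  have step1 : |κ|/8 * ‖c n‖ * (2*(n:ℝ)+1) * (2*(n:ℝ)) * ‖XXc θ‖^(2*n-1)
      ≤ |κ|/8 * ((n:ℝ)+1)^(2*m) * (2*(n:ℝ)+2) * (2*(n:ℝ)+2) * ((1/r) * (r^2)^n) := by
    gcongr <;> first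
      | exact hc n
      | linarith
      | exact (pow_le_pow_left₀ (norm_nonneg _) hX _).trans (rpow_sub_le' hr0 hr1 n)
  refine step1.trans ?_
  have : (2*(n:ℝ)+2) * (2*(n:ℝ)+2) = 4 * ((n:ℝ)+1)^2 := by ring
  calc |κ|/8 * ((n:ℝ)+1)^(2*m) * (2*(n:ℝ)+2) * (2*(n:ℝ)+2) * ((1/r) * (r^2)^n)
      = (|κ|/2) * ((((n:ℝ)+1)^(2*m) * ((n:ℝ)+1)^2) * ((1/r) * (r^2)^n)) := by ring
    _ = (|κ|/2) * (((n:ℝ)+1)^(2*m+2) * ((1/r) * (r^2)^n)) := by rw [← pow_add]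
    _ ≤ (|κ|/2) * (((n:ℝ)+1)^(2*m+2) * ((1/r) * (r^2)^n)) := le_refl _

lemma tsum_tele (V g : ℕ → ℂ) (hg : ∀ n, g n = V n - V (n+1)) (hS : Summable g)
    (hV0 : V 0 = 0) (hV : Filter.Tendsto V Filter.atTop (nhds 0)) : ∑' n, g n = 0 := by
  have h1 : ∀ N, ∑ i ∈ Finset.range N, g i = V 0 - V N := by
    intro N
    rw [Finset.sum_congr rfl (fun i _ => hg i)]
    exact Finset.sum_range_sub' V N
  have h2 : HasSum g 0 := by
    rw [hS.hasSum_iff_tendsto_nat]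
    simp only [h1, hV0, zero_sub]
    simpa using hV.neg
  exact h2.tsum_eq

lemma abs_cos_lt_one {y : ℝ} (h1 : 0 < y) (h2 : y < π) : |Real.cos y| < 1 := by
  have hs := Real.sin_pos_of_pos_of_lt_pi h1 h2
  have hpy := Real.sin_sq_add_cos_sq y
  have habs : |Real.cos y|^2 = (Real.cos y)^2 := sq_abs _
  nlinarith [abs_nonneg (Real.cos y)]


/-- `M^o_{κ,λ}(θ) = F(1-2/κ+s', 1-2/κ-s'; 3/2; cos²(θ/2)) cos(θ/2)` is
twice differentiable and satisfies the generator-plus-λ equation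
`λ M(θ) + ((κ-4)/2) cot(θ/2) M'(θ) + (κ/2) M''(θ) = 0` for `0 < θ < 2π`. -/
theorem Mo_solves_generator_equation (κ : ℝ) (h1 : 8 / 3 < κ) (h2 : κ < 8)
    (lam s' : ℂ) (hs : s' ^ 2 = (1 / 2 - 2 / (κ : ℂ)) ^ 2 + 2 * lam / (κ : ℂ))
    (M : ℝ → ℂ)
    (hM : M = fun θ : ℝ =>
      (∑' n : ℕ, hypCoef (1 - 2 / (κ : ℂ) + s') (1 - 2 / (κ : ℂ) - s') (3 / 2) n *
          (((Real.cos (θ / 2) : ℂ)) ^ 2) ^ n) * (Real.cos (θ / 2) : ℂ)) :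
    ∀ θ : ℝ, 0 < θ → θ < 2 * π →
      DifferentiableAt ℝ M θ ∧ DifferentiableAt ℝ (deriv M) θ ∧
      lam * M θ
        + (((κ : ℂ) - 4) / 2) * ((Real.cos (θ / 2) / Real.sin (θ / 2) : ℝ) : ℂ) * deriv M θ
        + ((κ : ℂ) / 2) * deriv (deriv M) θ = 0 := by
  intro θ₀ hp hl
  have hπ := Real.pi_pos
  have hκ0 : (κ:ℂ) ≠ 0 := by
    simp only [ne_eq, Complex.ofReal_eq_zero]
    intro h; rw [h] at h1; norm_num at h1
  set a : ℂ := 1 - 2/(κ:ℂ) + s' with ha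
  set b : ℂ := 1 - 2/(κ:ℂ) - s' with hb
  set c : ℕ → ℂ := hypCoef a b (3/2) with hc
  -- coefficient bound
  set m : ℕ := ⌈‖a‖⌉₊ + ⌈‖b‖⌉₊ + 1 with hm
  have hma : ‖a‖ ≤ (m:ℝ) := by
    calc ‖a‖ ≤ (⌈‖a‖⌉₊ : ℝ) := Nat.le_ceil _
      _ ≤ (m:ℝ) := by exact_mod_cast (by rw [hm]; omega : ⌈‖a‖⌉₊ ≤ m)
  have hmb : ‖b‖ ≤ (m:ℝ) := by
    calc ‖b‖ ≤ (⌈‖b‖⌉₊ : ℝ) := Nat.le_ceil _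
      _ ≤ (m:ℝ) := by exact_mod_cast (by rw [hm]; omega : ⌈‖b‖⌉₊ ≤ m)
  have hcb : ∀ n, ‖c n‖ ≤ ((n:ℝ)+1)^(2*m) := hypCoef_bound a b m hma hmb
  -- interval
  set t : Set ℝ := Set.Ioo (θ₀/2) (θ₀/2 + π) with ht
  have hθt : θ₀ ∈ t := ⟨by linarith, by linarith⟩
  have hopen : IsOpen t := isOpen_Ioo
  have hconn : IsPreconnected t := isPreconnected_Ioo
  -- r bound
  set r0 : ℝ := max |Real.cos (θ₀/4)| |Real.cos (θ₀/4 + π/2)| with hr0def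
  set r : ℝ := max r0 (1/2) with hrdef
  have hrpos : 0 < r := lt_of_lt_of_le (by norm_num) (le_max_right _ _)
  have hrlt1 : r < 1 := by
    have c1 : |Real.cos (θ₀/4)| < 1 := abs_cos_lt_one (by linarith) (by linarith)
    have c2 : |Real.cos (θ₀/4 + π/2)| < 1 := abs_cos_lt_one (by linarith) (by linarith)
    exact max_lt (max_lt c1 c2) (by norm_num)
  have hrle1 : r ≤ 1 := hrlt1.le
  have hXb : ∀ θ ∈ t, ‖XXc θ‖ ≤ r := by
    intro θ hθ
    obtain ⟨hθ1, hθ2⟩ := hθ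
    have hmemA : θ₀/4 ∈ Set.Icc 0 π := ⟨by linarith, by linarith⟩
    have hmemB : θ/2 ∈ Set.Icc 0 π := ⟨by linarith, by linarith⟩
    have hmemC : θ₀/4 + π/2 ∈ Set.Icc 0 π := ⟨by linarith, by linarith⟩
    have lt1 : Real.cos (θ/2) < Real.cos (θ₀/4) :=
      Real.strictAntiOn_cos hmemA hmemB (by linarith)
    have lt2 : Real.cos (θ₀/4 + π/2) < Real.cos (θ/2) :=
      Real.strictAntiOn_cos hmemB hmemC (by linarith)
    have habs : |Real.cos (θ/2)| ≤ r0 := by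
      rw [abs_le]
      constructor
      · have := neg_abs_le (Real.cos (θ₀/4 + π/2))
        have := le_max_right |Real.cos (θ₀/4)| |Real.cos (θ₀/4 + π/2)|
        rw [hr0def]
        linarith [neg_abs_le (Real.cos (θ₀/4 + π/2)),
          le_max_right |Real.cos (θ₀/4)| |Real.cos (θ₀/4 + π/2)|]
      · rw [hr0def]
        linarith [le_abs_self (Real.cos (θ₀/4)),
          le_max_left |Real.cos (θ₀/4)| |Real.cos (θ₀/4 + π/2)|]
    have : ‖XXc θ‖ = |Real.cos (θ/2)| := by
      unfold XXc; rw [Complex.norm_real, Real.norm_eq_abs]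
    rw [this]
    exact habs.trans (le_max_left _ _)
  -- summabilities
  have hr2pos : 0 < r^2 := by positivity
  have hr2lt : r^2 < 1 := by nlinarith
  have Su0 : Summable (fun n : ℕ => ((n:ℝ)+1)^(2*m) * (r^2)^n) := aux_summable _ hr2pos hr2lt
  have Su1 : Summable (fun n : ℕ => ((n:ℝ)+1)^(2*m+1) * (r^2)^n) := aux_summable _ hr2pos hr2lt
  have Su2 : Summable (fun n : ℕ => (1/r) * ((n:ℝ)+1)^(2*m+2) * (r^2)^n) :=
    ((aux_summable (2*m+2) hr2pos hr2lt).mul_left (1/r)).congr (fun n => by ring)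
  have S0 : Summable (fun n => fF c n θ₀) :=
    Summable.of_norm_bounded Su0 (fun n => norm_fF_le c m hcb hrpos hrle1 (hXb θ₀ hθt) n)
  have S1 : Summable (fun n => fF1 c n θ₀) :=
    Summable.of_norm_bounded Su1 (fun n => norm_fF1_le c m hcb hrpos hrle1 (hXb θ₀ hθt) n)
  have S2 : Summable (fun n => fF2 c n θ₀) :=
    Summable.of_norm_bounded Su2 (fun n => norm_fF2_le c m hcb hrpos hrle1 (hXb θ₀ hθt) n)
  -- M as series
  have hMf : M = fun θ => ∑' n, fF c n θ := by
    rw [hM]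
    funext θ
    rw [← tsum_mul_right]
    exact tsum_congr fun n => by
      show c n * ((XXc θ)^2)^n * XXc θ = fF c n θ
      unfold fF
      rw [mul_assoc, ← pow_mul, ← pow_succ]
  -- first derivative
  have key1 : ∀ θ ∈ t, HasDerivAt (fun θ' => ∑' n, fF c n θ') (∑' n, fF1 c n θ) θ :=
    fun θ hθ => hasDerivAt_tsum_of_isPreconnected Su1 hopen hconn
      (fun n y _ => hasDerivAt_fF c n y)
      (fun n y hy => norm_fF1_le c m hcb hrpos hrle1 (hXb y hy) n)
      hθt S0 hθ
  have hDiff1 : DifferentiableAt ℝ M θ₀ := by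
    rw [hMf]; exact (key1 θ₀ hθt).differentiableAt
  have hdM : ∀ θ ∈ t, deriv M θ = ∑' n, fF1 c n θ := by
    intro θ hθ
    rw [hMf]
    exact (key1 θ hθ).deriv
  -- second derivative
  have key2 : ∀ θ ∈ t, HasDerivAt (fun θ' => ∑' n, fF1 c n θ') (∑' n, fF2 c n θ) θ :=
    fun θ hθ => hasDerivAt_tsum_of_isPreconnected Su2 hopen hconn
      (fun n y _ => hasDerivAt_fF1 c n y)
      (fun n y hy => norm_fF2_le c m hcb hrpos hrle1 (hXb y hy) n)
      hθt S1 hθ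
  have hEq : deriv M =ᶠ[nhds θ₀] (fun θ => ∑' n, fF1 c n θ) :=
    Filter.eventuallyEq_of_mem (hopen.mem_nhds hθt) hdM
  have hD2 : HasDerivAt (deriv M) (∑' n, fF2 c n θ₀) θ₀ :=
    (key2 θ₀ hθt).congr_of_eventuallyEq hEq
  have hDiff2 : DifferentiableAt ℝ (deriv M) θ₀ := hD2.differentiableAt
  refine ⟨hDiff1, hDiff2, ?_⟩
  -- rewrite goal
  have hM0 : M θ₀ = ∑' n, fF c n θ₀ := by rw [hMf]
  rw [hdM θ₀ hθt, hD2.deriv, hM0]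
  -- trig facts
  have hsinpos : 0 < Real.sin (θ₀/2) := Real.sin_pos_of_pos_of_lt_pi (by linarith) (by linarith)
  have hss : ((Real.sin (θ₀/2) : ℝ) : ℂ) ≠ 0 := by
    exact Complex.ofReal_ne_zero.mpr hsinpos.ne'
  have hcot : (((Real.cos (θ₀/2) / Real.sin (θ₀/2) : ℝ)) : ℂ)
      = XXc θ₀ / ((Real.sin (θ₀/2) : ℝ) : ℂ) := by
    rw [Complex.ofReal_div]; rfl
  have hx2 : ((Real.sin (θ₀/2) : ℝ) : ℂ)^2 = 1 - XXc θ₀^2 := by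
    have h' : Real.sin (θ₀/2)^2 + Real.cos (θ₀/2)^2 = 1 := Real.sin_sq_add_cos_sq _
    have h'' : ((Real.sin (θ₀/2)^2 + Real.cos (θ₀/2)^2 : ℝ) : ℂ) = 1 := by
      rw [h']; norm_num
    rw [Complex.ofReal_add, Complex.ofReal_pow, Complex.ofReal_pow] at h''
    unfold XXc
    linear_combination h''
  rw [hcot]
  -- telescoping
  have hper : ∀ n, lam * fF c n θ₀
      + (((κ:ℂ)-4)/2) * (XXc θ₀ / ((Real.sin (θ₀/2) : ℝ) : ℂ)) * fF1 c n θ₀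
      + ((κ:ℂ)/2) * fF2 c n θ₀ = VV κ c θ₀ n - VV κ c θ₀ (n+1) := by
    intro n
    have E := hypCoef_kappa_rec κ hκ0 lam s' hs n
    rw [← ha, ← hb, ← hc] at E
    have T := tele_id (κ:ℂ) lam (c n) (c (n+1)) (XXc θ₀) ((Real.sin (θ₀/2) : ℝ) : ℂ)
      hss hx2 n E
    rw [VV_succ]
    unfold fF fF1 fF2 VV DDc
    linear_combination T
  have SV : Summable (VV κ c θ₀) :=
    Summable.of_norm_bounded
      ((((aux_summable (2*m+2) hr2pos hr2lt).mul_left (1/r)).congr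
          (fun n => by ring : ∀ n : ℕ, (1/r) * (((n:ℝ)+1)^(2*m+2) * (r^2)^n)
            = ((n:ℝ)+1)^(2*m+2) * ((1/r) * (r^2)^n))).mul_left (|κ|/2))
      (fun n => norm_VV_le κ c m hcb hrpos hrle1 (hXb θ₀ hθt) n)
  have hVt : Filter.Tendsto (VV κ c θ₀) Filter.atTop (nhds 0) := SV.tendsto_atTop_zero
  have Sg : Summable (fun n => lam * fF c n θ₀
      + (((κ:ℂ)-4)/2) * (XXc θ₀ / ((Real.sin (θ₀/2) : ℝ) : ℂ)) * fF1 c n θ₀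
      + ((κ:ℂ)/2) * fF2 c n θ₀) :=
    ((S0.mul_left lam).add (S1.mul_left _)).add (S2.mul_left _)
  have htsum0 := tsum_tele (VV κ c θ₀) _ hper Sg (VV_zero κ c θ₀) hVt
  have hsplit : (∑' n, (lam * fF c n θ₀
      + (((κ:ℂ)-4)/2) * (XXc θ₀ / ((Real.sin (θ₀/2) : ℝ) : ℂ)) * fF1 c n θ₀
      + ((κ:ℂ)/2) * fF2 c n θ₀))
      = lam * (∑' n, fF c n θ₀)
      + (((κ:ℂ)-4)/2) * (XXc θ₀ / ((Real.sin (θ₀/2) : ℝ) : ℂ)) * (∑' n, fF1 c n θ₀)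
      + ((κ:ℂ)/2) * (∑' n, fF2 c n θ₀) := by
    rw [Summable.tsum_add ((S0.mul_left lam).add (S1.mul_left _)) (S2.mul_left _),
      Summable.tsum_add (S0.mul_left lam) (S1.mul_left _),
      tsum_mul_left, tsum_mul_left, tsum_mul_left]
  rw [← hsplit]
  exact htsum0
end

section
/- Let p > 1 be a real number, let δ > 0, and let g : (−δ, δ) → ℝ be real-analytic. Define f(ω) = g(|ω|^p) for ω ∈ (−δ^{1/p}, δ^{1/p}). Then: (i) f is differentiable at every point of a neighborhood of 0, with f′(0) = 0, and f′ is continuous at 0; and (ii) there exist ε > 0 and convex functions u, v : (−ε, ε) → ℝ such that f(ω) = u(ω) − v(ω) for all ω ∈ (−ε, ε). In particular, f is locally a difference of two convex functions near 0. -/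
open Real Set Filter

private lemma aux_hasDerivAt_abs_rpow {p : ℝ} (hp : 1 < p) (ω : ℝ) :
    HasDerivAt (fun x : ℝ => |x| ^ p) (p * ω * |ω| ^ (p - 2)) ω := by
  rcases lt_trichotomy ω 0 with hω | rfl | hω
  · have hne : -ω ≠ 0 := neg_ne_zero.2 hω.ne
    have h1 : HasDerivAt (fun x : ℝ => (-x) ^ p) (p * (-ω) ^ (p - 1) * -1) ω :=
      (Real.hasDerivAt_rpow_const (Or.inl hne)).comp ω (hasDerivAt_neg ω)
    have h2 : HasDerivAt (fun x : ℝ => |x| ^ p) (p * (-ω) ^ (p - 1) * -1) ω := by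
      apply h1.congr_of_eventuallyEq
      filter_upwards [Iio_mem_nhds hω] with x hx
      rw [abs_of_neg hx]
    convert h2 using 1
    rw [abs_of_neg hω, show p - 1 = (p - 2) + 1 by ring, Real.rpow_add_one hne]
    ring
  · have h0 : HasDerivAt (fun x : ℝ => |x| ^ p) 0 0 := by
      rw [hasDerivAt_iff_tendsto_slope]
      apply squeeze_zero_norm' (a := fun x : ℝ => |x| ^ (p - 1))
      · filter_upwards [self_mem_nhdsWithin] with x (hx : x ≠ 0)
        have hax : (0 : ℝ) < |x| := abs_pos.2 hx
        have hsl : slope (fun x : ℝ => |x| ^ p) 0 x = |x| ^ p / x := by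
          simp [slope_def_field, Real.zero_rpow (by positivity : p ≠ 0)]
        rw [hsl, Real.norm_eq_abs, abs_div, abs_of_nonneg (Real.rpow_nonneg (abs_nonneg x) p),
          Real.rpow_sub hax, Real.rpow_one]
      · have hc : ContinuousAt (fun x : ℝ => |x| ^ (p - 1)) 0 :=
          (Real.continuousAt_rpow_const _ _ (Or.inr (by linarith))).comp
            continuous_abs.continuousAt
        have h0v : |(0:ℝ)| ^ (p - 1) = 0 := by
          simp [Real.zero_rpow (show p - 1 ≠ 0 by linarith)]
        have := hc.tendsto
        rw [h0v] at this
        exact this.mono_left nhdsWithin_le_nhds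
    convert h0 using 1
    simp
  · have h1 : HasDerivAt (fun x : ℝ => x ^ p) (p * ω ^ (p - 1)) ω :=
      Real.hasDerivAt_rpow_const (Or.inl hω.ne')
    have h2 : HasDerivAt (fun x : ℝ => |x| ^ p) (p * ω ^ (p - 1)) ω := by
      apply h1.congr_of_eventuallyEq
      filter_upwards [Ioi_mem_nhds hω] with x hx
      rw [abs_of_pos hx]
    convert h2 using 1
    rw [abs_of_pos hω, show p - 1 = (p - 2) + 1 by ring, Real.rpow_add_one hω.ne']
    ring

private lemma aux_pos_eq {p : ℝ} (hp : 1 < p) {z : ℝ} (hz : 0 ≤ z) :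
    p * z * |z| ^ (p - 2) = p * z ^ (p - 1) := by
  rcases eq_or_lt_of_le hz with h | h
  · simp [← h, Real.zero_rpow (show p - 1 ≠ 0 by linarith)]
  · rw [abs_of_pos h, show p - 1 = (p - 2) + 1 by ring, Real.rpow_add_one h.ne']
    ring

private lemma aux_F_mono {p : ℝ} (hp : 1 < p) :
    Monotone (fun ω : ℝ => p * ω * |ω| ^ (p - 2)) := by
  have hp0 : (0:ℝ) < p := by linarith
  have key2 : ∀ x y : ℝ, 0 ≤ x → x ≤ y →
      p * x * |x| ^ (p - 2) ≤ p * y * |y| ^ (p - 2) := by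
    intro x y hx hxy
    rw [aux_pos_eq hp hx, aux_pos_eq hp (hx.trans hxy)]
    exact mul_le_mul_of_nonneg_left
      (Real.rpow_le_rpow hx hxy (by linarith)) hp0.le
  intro x y hxy
  dsimp only
  rcases le_or_gt 0 x with hx | hx
  · exact key2 x y hx hxy
  rcases le_or_gt 0 y with hy | hy
  · have h1 : p * x * |x| ^ (p - 2) ≤ 0 :=
      mul_nonpos_of_nonpos_of_nonneg
        (mul_nonpos_of_nonneg_of_nonpos hp0.le hx.le)
        (Real.rpow_nonneg (abs_nonneg x) _)
    have h2 : 0 ≤ p * y * |y| ^ (p - 2) := by positivity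
    linarith
  · have h := key2 (-y) (-x) (by linarith) (by linarith)
    rw [abs_neg, abs_neg] at h
    nlinarith [h]

private lemma aux_F_cont {p : ℝ} (hp : 1 < p) :
    Continuous (fun ω : ℝ => p * ω * |ω| ^ (p - 2)) := by
  have hp0 : (0:ℝ) < p := by linarith
  rw [continuous_iff_continuousAt]
  intro x
  rcases eq_or_ne x 0 with rfl | hx
  · have hb : ∀ z : ℝ, ‖p * z * |z| ^ (p - 2)‖ ≤ p * |z| ^ (p - 1) := by
      intro z
      rcases eq_or_ne z 0 with rfl | hz
      · simp [Real.zero_rpow (show p - 1 ≠ 0 by linarith)]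
      · have haz : (0:ℝ) < |z| := abs_pos.2 hz
        have h1 : |z| ^ (p - 1) = |z| * |z| ^ (p - 2) := by
          rw [show p - 1 = 1 + (p - 2) by ring, Real.rpow_add haz, Real.rpow_one]
        rw [Real.norm_eq_abs, abs_mul, abs_mul, abs_of_pos hp0,
          abs_of_nonneg (Real.rpow_nonneg (abs_nonneg z) _), h1]
        ring_nf
        exact le_refl _
    have htend : Tendsto (fun z : ℝ => p * |z| ^ (p - 1)) (nhds 0) (nhds 0) := by
      have hc : ContinuousAt (fun z : ℝ => p * |z| ^ (p - 1)) 0 :=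
        continuousAt_const.mul
          ((Real.continuousAt_rpow_const _ _ (Or.inr (by linarith))).comp
            continuous_abs.continuousAt)
      simpa [Real.zero_rpow (show p - 1 ≠ 0 by linarith)] using hc.tendsto
    have := squeeze_zero_norm hb htend
    have hval : (fun ω : ℝ => p * ω * |ω| ^ (p - 2)) 0 = 0 := by simp
    unfold ContinuousAt
    rw [hval]
    exact this
  · exact (continuousAt_const.mul continuousAt_id).mul
      ((Real.continuousAt_rpow_const _ _ (Or.inl (abs_ne_zero.2 hx))).comp
        continuous_abs.continuousAt)

/-- if `g` is real-analytic near `0` and `p > 1`, then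
`f(ω) = g(|ω|^p)` is differentiable near `0` with `f'(0) = 0` and `f'` continuous
at `0`, and near `0` it is a difference of two convex functions. -/
theorem rpow_comp_analytic_regularity (p : ℝ) (hp : 1 < p) (δ : ℝ) (hδ : 0 < δ)
    (g : ℝ → ℝ) (hg : AnalyticOnNhd ℝ g (Set.Ioo (-δ) δ))
    (f : ℝ → ℝ) (hf : f = fun ω : ℝ => g (|ω| ^ p)) :
    (∃ ε > 0, (∀ ω ∈ Set.Ioo (-ε) ε, DifferentiableAt ℝ f ω) ∧
      deriv f 0 = 0 ∧ ContinuousAt (deriv f) 0) ∧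
    (∃ ε > 0, ∃ u v : ℝ → ℝ, ConvexOn ℝ (Set.Ioo (-ε) ε) u ∧
      ConvexOn ℝ (Set.Ioo (-ε) ε) v ∧
      ∀ ω ∈ Set.Ioo (-ε) ε, f ω = u ω - v ω) := by
  subst hf
  have hp0 : (0:ℝ) < p := by linarith
  -- basic objects
  set F : ℝ → ℝ := fun ω => p * ω * |ω| ^ (p - 2) with hFdef
  have hFd : ∀ ω : ℝ, HasDerivAt (fun x : ℝ => |x| ^ p) (F ω) ω :=
    fun ω => aux_hasDerivAt_abs_rpow hp ω
  have hFcont : Continuous F := aux_F_cont hp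
  have hφcont : Continuous (fun ω : ℝ => |ω| ^ p) :=
    (Real.continuous_rpow_const hp0.le).comp continuous_abs
  have hg1 : AnalyticOnNhd ℝ (deriv g) (Set.Ioo (-δ) δ) := hg.deriv
  have hg2 : AnalyticOnNhd ℝ (deriv (deriv g)) (Set.Ioo (-δ) δ) := hg1.deriv
  set r : ℝ := δ / 2 with hrdef
  have hr : 0 < r := by positivity
  have hIcc : Set.Icc (-r) r ⊆ Set.Ioo (-δ) δ := by
    intro x hx
    constructor
    · have := hx.1; simp only [hrdef] at this ⊢; linarith
    · have := hx.2; simp only [hrdef] at this ⊢; linarith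
  set ε : ℝ := min (r ^ (1/p)) 1 with hεdef
  have hε : 0 < ε := lt_min (Real.rpow_pos_of_pos hr _) one_pos
  have hmem : ∀ ω : ℝ, |ω| < ε → |ω| ^ p ≤ r ∧ |ω| ≤ 1 := by
    intro ω hω
    constructor
    · have h1 : |ω| < r ^ (1/p) := lt_of_lt_of_le hω (min_le_left _ _)
      have h2 : |ω| ^ p < (r ^ (1/p)) ^ p := Real.rpow_lt_rpow (abs_nonneg ω) h1 hp0
      have h3 : (r ^ (1/p)) ^ p = r := by
        rw [← Real.rpow_mul hr.le, one_div_mul_cancel hp0.ne', Real.rpow_one]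
      linarith [h2, h3.le]
    · exact le_of_lt (lt_of_lt_of_le hω (min_le_right _ _))
  have hmemδ : ∀ ω : ℝ, |ω| < ε → |ω| ^ p ∈ Set.Icc (-r) r := by
    intro ω hω
    exact ⟨le_trans (by linarith) (Real.rpow_nonneg (abs_nonneg ω) p), (hmem ω hω).1⟩
  have habs : ∀ ω : ℝ, ω ∈ Set.Ioo (-ε) ε → |ω| < ε := by
    intro ω hω; rw [abs_lt]; exact hω
  -- derivative of f on the interval
  have hfd : ∀ ω ∈ Set.Ioo (-ε) ε,
      HasDerivAt (fun x : ℝ => g (|x| ^ p)) (deriv g (|ω| ^ p) * F ω) ω := by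
    intro ω hω
    have hin : |ω| ^ p ∈ Set.Ioo (-δ) δ := hIcc (hmemδ ω (habs ω hω))
    exact ((hg _ hin).differentiableAt.hasDerivAt).comp ω (hFd ω)
  have hmem0 : (0:ℝ) ∈ Set.Ioo (-ε) ε := by constructor <;> simp [hε]
  have hF0 : F 0 = 0 := by simp [hFdef]
  -- ========== Part (i) ==========
  constructor
  · refine ⟨ε, hε, fun ω hω => (hfd ω hω).differentiableAt, ?_, ?_⟩
    · rw [(hfd 0 hmem0).deriv, hF0, mul_zero]
    · have heq : deriv (fun x : ℝ => g (|x| ^ p)) =ᶠ[nhds 0]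
          fun ω => deriv g (|ω| ^ p) * F ω := by
        filter_upwards [Ioo_mem_nhds hmem0.1 hmem0.2] with ω hω
        exact (hfd ω hω).deriv
      have hc : ContinuousAt (fun ω : ℝ => deriv g (|ω| ^ p) * F ω) 0 := by
        apply ContinuousAt.mul _ hFcont.continuousAt
        have h0in : (0:ℝ) ∈ Set.Ioo (-δ) δ := ⟨by linarith, hδ⟩
        have hc1 : ContinuousAt (deriv g) ((fun ω : ℝ => |ω| ^ p) 0) := by
          have : (fun ω : ℝ => |ω| ^ p) 0 = 0 := by
            simp [Real.zero_rpow hp0.ne']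
          rw [this]
          exact (hg1 0 h0in).continuousAt
        exact ContinuousAt.comp (f := fun ω : ℝ => |ω| ^ p) hc1 hφcont.continuousAt
      exact hc.congr heq.symm
  -- ========== Part (ii) ==========
  · obtain ⟨M₀, hM₀⟩ := isCompact_Icc.exists_bound_of_continuousOn
      ((hg2.continuousOn).mono hIcc)
    set M : ℝ := max M₀ 0 with hMdef
    have hM : 0 ≤ M := le_max_right _ _
    have hMb : ∀ x ∈ Set.Icc (-r) r, |deriv (deriv g) x| ≤ M := by
      intro x hx
      exact le_trans (by simpa [Real.norm_eq_abs] using hM₀ x hx) (le_max_left _ _)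
    set a : ℝ := deriv g 0 with hadef
    have hlip : ∀ y ∈ Set.Icc (-r) r, |deriv g y - a| ≤ M * |y| := by
      intro y hy
      have h0m : (0:ℝ) ∈ Set.Icc (-r) r := by constructor <;> linarith
      have key := (convex_Icc (-r) r).norm_image_sub_le_of_norm_deriv_le
        (f := deriv g)
        (fun x hx => (hg1 x (hIcc hx)).differentiableAt)
        (fun x hx => by simpa [Real.norm_eq_abs] using hMb x hx)
        h0m hy
      rw [hadef]
      simpa [Real.norm_eq_abs] using key
    set C : ℝ := M * p ^ 2 with hCdef
    have hC : 0 ≤ C := by positivity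
    set k : ℝ → ℝ := fun ω => g (|ω| ^ p) - a * |ω| ^ p + C * ω ^ 2 with hkdef
    set k' : ℝ → ℝ := fun ω => (deriv g (|ω| ^ p) - a) * F ω + 2 * C * ω with hk'def
    have hkd : ∀ ω ∈ Set.Ioo (-ε) ε, HasDerivAt k (k' ω) ω := by
      intro ω hω
      have h1 := hfd ω hω
      have h2 : HasDerivAt (fun x : ℝ => a * |x| ^ p) (a * F ω) ω := (hFd ω).const_mul a
      have h3 : HasDerivAt (fun x : ℝ => C * x ^ 2) (C * (2 * ω)) ω := by
        simpa using (hasDerivAt_pow 2 ω).const_mul C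
      have h4 := (h1.sub h2).add h3
      refine h4.congr_deriv ?_
      simp only [hk'def]
      ring
    have hk'0 : k' 0 = 0 := by simp [hk'def, hF0]
    have hk'odd : ∀ ω : ℝ, k' (-ω) = -k' ω := by
      intro ω
      simp only [hk'def, hFdef, abs_neg]
      ring
    have hk'c : ∀ ω ∈ Set.Ioo (-ε) ε, ContinuousAt k' ω := by
      intro ω hω
      have hin : |ω| ^ p ∈ Set.Ioo (-δ) δ := hIcc (hmemδ ω (habs ω hω))
      have hc1 : ContinuousAt (fun x : ℝ => deriv g (|x| ^ p)) ω :=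
        ContinuousAt.comp (f := fun x : ℝ => |x| ^ p) ((hg1 _ hin).continuousAt)
          hφcont.continuousAt
      exact ((hc1.sub continuousAt_const).mul hFcont.continuousAt).add
        (continuousAt_const.mul continuousAt_id)
    have hD : ∀ x ∈ Set.Ioo (0:ℝ) ε, HasDerivAt k'
        (deriv (deriv g) (x ^ p) * (p * x ^ (p - 1)) * (p * x ^ (p - 1))
          + (deriv g (x ^ p) - a) * (p * ((p - 1) * x ^ (p - 2))) + 2 * C) x := by
      intro x hx
      obtain ⟨hx0, hxε⟩ := hx
      have haxx : |x| = x := abs_of_pos hx0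
      have hxδ : x ^ p ∈ Set.Ioo (-δ) δ := by
        have := hIcc (hmemδ x (by rw [haxx]; exact hxε))
        rwa [haxx] at this
      have e1 : HasDerivAt (fun y : ℝ => y ^ p) (p * x ^ (p - 1)) x :=
        Real.hasDerivAt_rpow_const (Or.inl hx0.ne')
      have e2 : HasDerivAt (fun y : ℝ => deriv g (y ^ p))
          (deriv (deriv g) (x ^ p) * (p * x ^ (p - 1))) x :=
        by have := ((hg1 _ hxδ).differentiableAt.hasDerivAt).comp x e1; exact this
      have e3 : HasDerivAt (fun y : ℝ => y ^ (p - 1)) ((p - 1) * x ^ (p - 2)) x := by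
        have h := Real.hasDerivAt_rpow_const (x := x) (p := p - 1) (Or.inl hx0.ne')
        rw [show p - 1 - 1 = p - 2 by ring] at h
        exact h
      have e4 := ((e2.sub_const a).mul (e3.const_mul p)).add
        ((hasDerivAt_id x).const_mul (2 * C))
      have heq : k' =ᶠ[nhds x]
          fun y => (deriv g (y ^ p) - a) * (p * y ^ (p - 1)) + 2 * C * y := by
        filter_upwards [Ioi_mem_nhds hx0] with y (hy : 0 < y)
        simp only [hk'def, hFdef]
        rw [aux_pos_eq hp hy.le, abs_of_pos hy]
      have e5 := e4.congr_of_eventuallyEq heq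
      refine e5.congr_deriv ?_
      beta_reduce
      ring
    have hmono0 : MonotoneOn k' (Set.Ico (0:ℝ) ε) := by
      apply monotoneOn_of_deriv_nonneg (convex_Ico _ _)
      · intro x hx
        exact (hk'c x ⟨by linarith [hx.1, hε], hx.2⟩).continuousWithinAt
      · rw [interior_Ico]
        intro x hx
        exact (hD x hx).differentiableAt.differentiableWithinAt
      · rw [interior_Ico]
        intro x hx
        rw [(hD x hx).deriv]
        obtain ⟨hx0, hxε⟩ := hx
        have haxx : |x| = x := abs_of_pos hx0
        have hx1 : x ≤ 1 := by
          have := (hmem x (by rw [haxx]; exact hxε)).2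
          rwa [haxx] at this
        have hxr : x ^ p ∈ Set.Icc (-r) r := by
          have := hmemδ x (by rw [haxx]; exact hxε)
          rwa [haxx] at this
        have hb0 : 0 ≤ p * x ^ (p - 1) :=
          mul_nonneg hp0.le (Real.rpow_nonneg hx0.le _)
        have hb1 : x ^ (p - 1) ≤ 1 := Real.rpow_le_one hx0.le hx1 (by linarith)
        have hbp : p * x ^ (p - 1) ≤ p := by nlinarith
        have hg2b := hMb _ hxr
        have hab := hlip _ hxr
        rw [abs_of_nonneg (Real.rpow_nonneg hx0.le p)] at hab
        have hxe : 0 ≤ x ^ (p - 2) := Real.rpow_nonneg hx0.le _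
        have hxp0 : 0 ≤ x ^ p := Real.rpow_nonneg hx0.le p
        have hse : x ^ p * x ^ (p - 2) ≤ 1 := by
          rw [← Real.rpow_add hx0]
          exact Real.rpow_le_one hx0.le hx1 (by linarith)
        obtain ⟨hg2l, hg2u⟩ := abs_le.1 hg2b
        obtain ⟨habl, habu⟩ := abs_le.1 hab
        have hq0 : 0 ≤ p * ((p - 1) * x ^ (p - 2)) :=
          mul_nonneg hp0.le (mul_nonneg (by linarith) hxe)
        simp only [hCdef]
        nlinarith [mul_nonneg (mul_nonneg
            (by linarith : (0:ℝ) ≤ deriv (deriv g) (x ^ p) + M) hb0) hb0,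
          mul_le_mul_of_nonneg_left (mul_le_mul hbp hbp hb0 hp0.le) hM,
          mul_le_mul_of_nonneg_right habl hq0,
          mul_le_mul_of_nonneg_left hse
            (mul_nonneg (mul_nonneg hM hp0.le) (by linarith : (0:ℝ) ≤ p - 1)),
          mul_nonneg hM hp0.le]
    have hmono : MonotoneOn k' (Set.Ioo (-ε) ε) := by
      have h0Ico : (0:ℝ) ∈ Set.Ico (0:ℝ) ε := ⟨le_rfl, hε⟩
      intro x hx y hy hxy
      rcases le_or_gt 0 x with h0x | h0x
      · exact hmono0 ⟨h0x, hx.2⟩ ⟨h0x.trans hxy, hy.2⟩ hxy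
      rcases le_or_gt 0 y with h0y | h0y
      · have h1 : k' 0 ≤ k' (-x) := hmono0 h0Ico ⟨by linarith, by linarith [hx.1]⟩ (by linarith)
        have h2 : k' 0 ≤ k' y := hmono0 h0Ico ⟨h0y, hy.2⟩ h0y
        have h3 := hk'odd x
        rw [hk'0] at h1 h2
        linarith
      · have h1 : k' (-y) ≤ k' (-x) :=
          hmono0 ⟨by linarith, by linarith [hy.1]⟩ ⟨by linarith, by linarith [hx.1]⟩ (by linarith)
        have h3 := hk'odd x
        have h4 := hk'odd y
        linarith
    have hkconv : ConvexOn ℝ (Set.Ioo (-ε) ε) k := by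
      apply MonotoneOn.convexOn_of_deriv (convex_Ioo _ _)
      · exact fun x hx => (hkd x hx).continuousAt.continuousWithinAt
      · rw [interior_Ioo]
        exact fun x hx => (hkd x hx).differentiableAt.differentiableWithinAt
      · rw [interior_Ioo]
        intro x hx y hy hxy
        rw [(hkd x hx).deriv, (hkd y hy).deriv]
        exact hmono hx hy hxy
    have hφconv : ConvexOn ℝ (Set.Ioo (-ε) ε) (fun ω : ℝ => |ω| ^ p) := by
      apply MonotoneOn.convexOn_of_deriv (convex_Ioo _ _)
      · exact hφcont.continuousOn
      · rw [interior_Ioo]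
        exact fun x _ => (hFd x).differentiableAt.differentiableWithinAt
      · rw [interior_Ioo]
        intro x _ y _ hxy
        rw [(hFd x).deriv, (hFd y).deriv]
        exact aux_F_mono hp hxy
    have hsqconv : ConvexOn ℝ (Set.Ioo (-ε) ε) (fun ω : ℝ => C * ω ^ 2) := by
      have h := (Even.convexOn_pow (even_two)).smul hC
      have h2 : ConvexOn ℝ Set.univ (fun ω : ℝ => C * ω ^ 2) := by
        simpa [smul_eq_mul] using h
      exact h2.subset (Set.subset_univ _) (convex_Ioo _ _)
    refine ⟨ε, hε, k + (max a 0) • (fun ω : ℝ => |ω| ^ p),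
      (fun ω : ℝ => C * ω ^ 2) + (max a 0 - a) • (fun ω : ℝ => |ω| ^ p),
      hkconv.add (hφconv.smul (le_max_right a 0)),
      hsqconv.add (hφconv.smul (sub_nonneg.2 (le_max_left a 0))), ?_⟩
    intro ω hω
    simp only [Pi.add_apply, Pi.smul_apply, smul_eq_mul, hkdef]
    ring
end
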